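/- arXiv:1910.02819 — 6 statements merged into one kernel-verified Lean document; each statement's English description precedes it below -/
import Mathlib

section
/- Every Eulerian trail of the graph F_6 contains a subcycle of length at most 4; in particular, F_6 admits no 4-locally self-avoiding Eulerian trail. -/
open SimpleGraph

namespace Quartic

variable {V : Type*}

/-- The vertex list `l` (the support of a trail `v_0 v_1 … v_m`) has a subcycle of
length `t` beginning at index `i`: the entries at positions `i` and `i + t` coincide
and the entries at positions `i, …, i + t - 1` are pairwise distinct.  Only short
lengths `1 ≤ t ≤ 4` are recorded. -/
def ShortSubcycleAt (l : List V) (i t : ℕ) : Prop :=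
  1 ≤ t ∧ t ≤ 4 ∧ i + t < l.length ∧
    l[i]? = l[i + t]? ∧
    ∀ p q, i ≤ p → p < q → q < i + t → l[p]? ≠ l[q]?

/-- A trail (given as a walk) is 4-locally self-avoiding if it has no subcycle of
length at most 4. -/
def TrailLSA4 {G : SimpleGraph V} {u v : V} (W : G.Walk u v) : Prop :=
  ¬ ∃ i t, ShortSubcycleAt W.support i t

/-- Cyclic analogue of `ShortSubcycleAt`, used for circuits: here `l` is the support
of a closed walk with the repeated final vertex removed, and indices are taken modulo
`l.length`, so that subcycles may wrap around the base point. -/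
def CyclicShortSubcycleAt (l : List V) (i t : ℕ) : Prop :=
  1 ≤ t ∧ t ≤ 4 ∧ t ≤ l.length ∧
    l[i % l.length]? = l[(i + t) % l.length]? ∧
    ∀ p q, p < q → q < t →
      l[(i + p) % l.length]? ≠ l[(i + q) % l.length]?

/-- A circuit (closed walk) is 4-locally self-avoiding if it has no cyclic subcycle of
length at most 4. -/
def CircuitLSA4 {G : SimpleGraph V} {u : V} (W : G.Walk u u) : Prop :=
  ¬ ∃ i t, CyclicShortSubcycleAt W.support.dropLast i t

/-- `W` is an Eulerian trail of its graph: a trail traversing every edge exactly once. -/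
def IsEulerianTrail {G : SimpleGraph V} {u v : V} (W : G.Walk u v) : Prop :=
  W.IsTrail ∧ ∀ e, e ∈ G.edgeSet ↔ e ∈ W.edges

/-- `G` admits a 4-locally self-avoiding Eulerian circuit. -/
def HasLSA4EulerianCircuit (G : SimpleGraph V) : Prop :=
  ∃ (u : V) (W : G.Walk u u), IsEulerianTrail W ∧ CircuitLSA4 W

/-- An `L`-path-chain from `u` to `w` in `G`: a sequence of `k` pairwise edge-disjoint
paths covering `E(G)`, the `i`-th of length `ℓ i`, where the first path starts at `u`,
the last path ends at `w`, and consecutive paths share their endpoint. -/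
def PathChain (G : SimpleGraph V) (u w : V) {k : ℕ} (ℓ : Fin k → ℕ) : Prop :=
  ∃ (v : Fin (k + 1) → V) (P : ∀ i : Fin k, G.Walk (v i.castSucc) (v i.succ)),
    v 0 = u ∧ v (Fin.last k) = w ∧
    (∀ i, (P i).IsPath) ∧ (∀ i, (P i).length = ℓ i) ∧
    (∀ i j, i ≠ j → ∀ e, e ∈ (P i).edges → e ∉ (P j).edges) ∧
    (∀ e, e ∈ G.edgeSet → ∃ i, e ∈ (P i).edges)

/-- The graph `F₆` on vertices `x = 0`, `a = 1`, `b = 2`, `c = 3`, `d = 4`, `y = 5`,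
with the 11 edges `xa, xb, xc, ya, yc, yd, ab, bc, cd, ad, bd`. -/
def F6 : SimpleGraph (Fin 6) :=
  SimpleGraph.fromEdgeSet
    {s((0 : Fin 6), 1), s((0 : Fin 6), 2), s((0 : Fin 6), 3),
     s((5 : Fin 6), 1), s((5 : Fin 6), 3), s((5 : Fin 6), 4),
     s((1 : Fin 6), 2), s((2 : Fin 6), 3), s((3 : Fin 6), 4),
     s((1 : Fin 6), 4), s((2 : Fin 6), 4)}

/-- The octahedron `K_{2,2,2}`, with parts `{0,3}`, `{1,4}`, `{2,5}`. -/
def Octahedron : SimpleGraph (Fin 6) :=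
  SimpleGraph.fromRel (fun i j => (i : ℕ) % 3 ≠ (j : ℕ) % 3)

/-- The `n`-antiprism, on vertices `u i = (0, i)` and `w i = (1, i)` for `i : ZMod n`,
with edges `u i — u (i+1)`, `w i — w (i+1)`, `u i — w i` and `u (i+1) — w i`. -/
def Antiprism (n : ℕ) : SimpleGraph (Fin 2 × ZMod n) :=
  SimpleGraph.fromRel (fun p q =>
    (p.1 = q.1 ∧ q.2 = p.2 + 1) ∨
    (p.1 = 0 ∧ q.1 = 1 ∧ (q.2 = p.2 ∨ p.2 = q.2 + 1)))

/-- The graph `G₇` on vertices `x = 0`, `y = 1`, `a = 2`, `b = 3`, `c = 4`, `d = 5`,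
`e = 6`, with the 13 edges `xa, xd, xy, yb, ye, ab, ac, ad, bc, be, cd, ce, de`. -/
def G7 : SimpleGraph (Fin 7) :=
  SimpleGraph.fromEdgeSet
    {s((0 : Fin 7), 2), s((0 : Fin 7), 5), s((0 : Fin 7), 1),
     s((1 : Fin 7), 3), s((1 : Fin 7), 6),
     s((2 : Fin 7), 3), s((2 : Fin 7), 4), s((2 : Fin 7), 5),
     s((3 : Fin 7), 4), s((3 : Fin 7), 6),
     s((4 : Fin 7), 5), s((4 : Fin 7), 6), s((5 : Fin 7), 6)}

/-! The proof is an exhaustive search over the trails of `F₆`, run by `decide`. A branch of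
the search is cut as soon as its vertex sequence closes a subcycle of length at most 4,
since that subcycle is still present in every extension of the trail; and every branch
closes such a subcycle by the time it has used all 11 edges. -/

instance [DecidableEq V] (l : List V) (i t : ℕ) : Decidable (ShortSubcycleAt l i t) :=
  decidable_of_iff (1 ≤ t ∧ t ≤ 4 ∧ i + t < l.length ∧ l[i]? = l[i + t]? ∧
      ∀ q < i + t, ∀ p < q, i ≤ p → l[p]? ≠ l[q]?) <| by
    unfold ShortSubcycleAt
    exact Iff.rfl.and <| Iff.rfl.and <| Iff.rfl.and <| Iff.rfl.and
      ⟨fun h p q hip hpq hq => h q hq p hpq hip, fun h q hq p hpq hip => h p q hip hpq hq⟩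

theorem ShortSubcycleAt.append {l : List V} {i t : ℕ} (h : ShortSubcycleAt l i t)
    (l' : List V) : ShortSubcycleAt (l ++ l') i t := by
  obtain ⟨ht1, ht4, hlt, heq, hne⟩ := h
  have hget : ∀ n < l.length, (l ++ l')[n]? = l[n]? := fun n hn => List.getElem?_append_left hn
  refine ⟨ht1, ht4, by simp; omega, ?_, fun p q hip hpq hq => ?_⟩
  · rwa [hget i (by omega), hget (i + t) hlt]
  · rw [hget p (by omega), hget q (by omega)]
    exact hne p q hip hpq hq

def hasShortSubcycleAtEnd [DecidableEq V] (l : List V) : Bool :=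
  (List.range 5).any fun t => decide (ShortSubcycleAt l (l.length - (t + 1)) t)

theorem exists_shortSubcycleAt_of_hasShortSubcycleAtEnd [DecidableEq V] {l : List V}
    (h : hasShortSubcycleAtEnd l = true) : ∃ i t, ShortSubcycleAt l i t := by
  obtain ⟨t, -, ht⟩ := List.any_eq_true.1 h
  exact ⟨_, t, of_decide_eq_true ht⟩

/-- `shortSubcycleSearch vs n rem l c` certifies that every walk of length `n` from `c`
through vertices of `vs` that uses up the edges `rem` exactly once, appended to the vertex
sequence `l`, yields a sequence with a subcycle of length at most 4. -/
def shortSubcycleSearch [DecidableEq V] (vs : List V) :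
    ℕ → List (Sym2 V) → List V → V → Bool
  | 0, _, l, _ => hasShortSubcycleAtEnd l
  | n + 1, rem, l, c =>
    hasShortSubcycleAtEnd l || vs.all fun w =>
      if s(c, w) ∈ rem then shortSubcycleSearch vs n (rem.erase s(c, w)) (l ++ [w]) w else true

theorem exists_shortSubcycleAt_of_shortSubcycleSearch [DecidableEq V] {G : SimpleGraph V}
    {vs : List V} (hvs : ∀ v, v ∈ vs) {c v : V} (W : G.Walk c v) {rem : List (Sym2 V)}
    (hrem : W.edges.Perm rem) {l : List V}
    (h : shortSubcycleSearch vs W.length rem l c = true) :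
    ∃ i t, ShortSubcycleAt (l ++ W.support.tail) i t := by
  induction W generalizing rem l with
  | nil => simpa using exists_shortSubcycleAt_of_hasShortSubcycleAtEnd h
  | @cons c b v hadj W ih =>
    by_cases hend : hasShortSubcycleAtEnd l = true
    · obtain ⟨i, t, ht⟩ := exists_shortSubcycleAt_of_hasShortSubcycleAtEnd hend
      exact ⟨i, t, ht.append _⟩
    simp only [Walk.length_cons, shortSubcycleSearch, hend, Bool.false_or,
      List.all_eq_true] at h
    have hcb : s(c, b) ∈ rem := hrem.subset (by simp)
    have hrest : W.edges.Perm (rem.erase s(c, b)) := by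
      simpa using hrem.erase s(c, b)
    have hsearch := h b (hvs b)
    rw [if_pos hcb] at hsearch
    simpa using ih hrest hsearch

theorem IsEulerianTrail.edges_perm {G : SimpleGraph V} {u v : V} {W : G.Walk u v}
    (hW : IsEulerianTrail W) {L : List (Sym2 V)} (hL : L.Nodup)
    (hmem : ∀ e, e ∈ G.edgeSet ↔ e ∈ L) : W.edges.Perm L :=
  (List.perm_ext_iff_of_nodup hW.1.edges_nodup hL).2 fun e => (hW.2 e).symm.trans (hmem e)

theorem IsEulerianTrail.exists_shortSubcycleAt [DecidableEq V] {G : SimpleGraph V}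
    {vs : List V} (hvs : ∀ v, v ∈ vs) {L : List (Sym2 V)} (hL : L.Nodup)
    (hmem : ∀ e, e ∈ G.edgeSet ↔ e ∈ L)
    (hsearch : ∀ u, shortSubcycleSearch vs L.length L [u] u = true)
    {u v : V} {W : G.Walk u v} (hW : IsEulerianTrail W) :
    ∃ i t, ShortSubcycleAt W.support i t := by
  have hperm := hW.edges_perm hL hmem
  have hlen : W.length = L.length := by rw [← W.length_edges, hperm.length_eq]
  rw [← W.cons_tail_support]
  exact exists_shortSubcycleAt_of_shortSubcycleSearch hvs W hperm (hlen ▸ hsearch u)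

def F6EdgeList : List (Sym2 (Fin 6)) :=
  [s(0, 1), s(0, 2), s(0, 3), s(5, 1), s(5, 3), s(5, 4),
   s(1, 2), s(2, 3), s(3, 4), s(1, 4), s(2, 4)]

theorem mem_edgeSet_F6_iff (e : Sym2 (Fin 6)) : e ∈ F6.edgeSet ↔ e ∈ F6EdgeList := by
  induction e using Sym2.ind with
  | _ a b =>
    simp only [mem_edgeSet, F6, fromEdgeSet_adj, Set.mem_insert_iff, Set.mem_singleton_iff]
    revert a b
    decide

set_option maxHeartbeats 4000000 in
theorem shortSubcycleSearch_F6 (u : Fin 6) :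
    shortSubcycleSearch (List.finRange 6) F6EdgeList.length F6EdgeList [u] u = true := by
  revert u
  decide

/-- Every Eulerian trail of `F₆` contains a subcycle of length at most 4;
in particular, `F₆` admits no 4-locally self-avoiding Eulerian trail. -/
theorem F6_no_LSA4_eulerian_trail :
    (∀ (u v : Fin 6) (W : F6.Walk u v), IsEulerianTrail W →
      ∃ i t, ShortSubcycleAt W.support i t) ∧
    ¬ ∃ (u v : Fin 6) (W : F6.Walk u v), IsEulerianTrail W ∧ TrailLSA4 W := by
  have hshort : ∀ (u v : Fin 6) (W : F6.Walk u v), IsEulerianTrail W →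
      ∃ i t, ShortSubcycleAt W.support i t := fun _ _ _ hW =>
    hW.exists_shortSubcycleAt List.mem_finRange (by decide) mem_edgeSet_F6_iff
      shortSubcycleSearch_F6
  exact ⟨hshort, fun ⟨u, v, W, hW, hLSA⟩ => hLSA (hshort u v W hW)⟩

end Quartic
end

section
/- The octahedron admits no 4-locally self-avoiding Eulerian circuit: every Eulerian circuit of the octahedron contains a subcycle of length at most 4. -/
/-!
An Eulerian circuit of the octahedron has 12 edges. If it had no cyclic subcycle of length
at most 4, then no vertex would recur within 4 steps along it, since the shortest such
recurrence is a subcycle. A depth-first search over the trails of the octahedron in which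
no vertex recurs within 4 steps, checked by the kernel, finds none of length 12.
-/

open SimpleGraph

namespace Quartic

variable {V : Type*}

theorem octahedron_adj {i j : Fin 6} : Octahedron.Adj i j ↔ (i : ℕ) % 3 ≠ (j : ℕ) % 3 := by
  rw [Octahedron, fromRel_adj]
  exact ⟨fun h => h.2.elim id Ne.symm, fun h => ⟨fun e => h (e ▸ rfl), Or.inl h⟩⟩

instance : DecidableRel Octahedron.Adj := fun _ _ => decidable_of_iff _ octahedron_adj.symm

theorem octahedron_card_edgeFinset : Octahedron.edgeFinset.card = 12 := by decide

theorem IsEulerianTrail.length_eq_card_edgeFinset {G : SimpleGraph V} [Fintype G.edgeSet]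
    {u v : V} {W : G.Walk u v} (hW : IsEulerianTrail W) : W.length = G.edgeFinset.card := by
  classical
  have hE : W.edges.toFinset = G.edgeFinset := by ext e; simp [hW.2 e]
  rw [← hE, List.toFinset_card_of_nodup hW.1.edges_nodup, Walk.length_edges]

def NoRepeatWithin (k : ℕ) (l : List V) : Prop :=
  ∀ j t, 0 < t → t ≤ k → j + t < l.length → l[j]? ≠ l[j + t]?

theorem NoRepeatWithin.of_cons {k : ℕ} {a : V} {l : List V} (h : NoRepeatWithin k (a :: l)) :
    NoRepeatWithin k l := fun j t ht htk hjt => by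
  simpa [Nat.add_right_comm j 1 t] using h (j + 1) t ht htk (by simp; omega)

theorem NoRepeatWithin.not_mem_take {k : ℕ} {a : V} {l : List V}
    (h : NoRepeatWithin k (a :: l)) : a ∉ l.take k := by
  intro hm
  obtain ⟨j, hj, hja⟩ := List.mem_iff_getElem.mp hm
  rw [List.length_take] at hj
  apply h 0 (j + 1) j.succ_pos (by omega) (by simp; omega)
  simp [List.getElem?_eq_getElem (show j < l.length by omega), ← hja]

/-- A shortest cyclic repetition of length at most 4 is a short subcycle. -/
theorem exists_cyclicShortSubcycleAt {l : List V} (hl : 4 ≤ l.length) {i t : ℕ} (ht : 1 ≤ t)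
    (ht4 : t ≤ 4) (h : l[i % l.length]? = l[(i + t) % l.length]?) :
    ∃ i t, CyclicShortSubcycleAt l i t := by
  induction t using Nat.strong_induction_on generalizing i with
  | _ t ih =>
    by_cases hd : ∀ p q, p < q → q < t → l[(i + p) % l.length]? ≠ l[(i + q) % l.length]?
    · exact ⟨i, t, ht, ht4, ht4.trans hl, h, hd⟩
    · push Not at hd
      obtain ⟨p, q, hpq, hqt, heq⟩ := hd
      exact ih (q - p) (by omega) (by omega) (by omega) (i := i + p)
        (by rwa [show i + p + (q - p) = i + q by omega])

theorem _root_.SimpleGraph.Walk.getElem?_support_eq_getElem?_dropLast {G : SimpleGraph V}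
    {u : V} (W : G.Walk u u) (hW : 0 < W.length) {j : ℕ} (hj : j ≤ W.length) :
    W.support[j]? = W.support.dropLast[j % W.length]? := by
  rcases hj.lt_or_eq with hj | rfl
  · rw [Nat.mod_eq_of_lt hj, List.getElem?_dropLast, if_pos (by simpa using hj)]
  · rw [Nat.mod_self, List.getElem?_dropLast, if_pos (by simpa using hW),
      ← W.getVert_eq_support_getElem? le_rfl, ← W.getVert_eq_support_getElem? W.length.zero_le,
      Walk.getVert_length, Walk.getVert_zero]

theorem noRepeatWithin_support_of_not_cyclicShortSubcycleAt {G : SimpleGraph V} {u : V}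
    (W : G.Walk u u) (hW : 4 ≤ W.length)
    (h : ¬∃ i t, CyclicShortSubcycleAt W.support.dropLast i t) :
    NoRepeatWithin 4 W.support := by
  intro j t ht ht4 hjt heq
  have hlen : W.support.dropLast.length = W.length := by simp
  rw [Walk.length_support] at hjt
  rw [W.getElem?_support_eq_getElem?_dropLast (by omega) (by omega),
    W.getElem?_support_eq_getElem?_dropLast (by omega) (by omega), ← hlen] at heq
  exact h (exists_cyclicShortSubcycleAt (by omega) ht ht4 heq)

section TrailSearch

variable [DecidableEq V]

def containsEdge (a b : V) : List V → Bool
  | x :: y :: r => (a == x && b == y || a == y && b == x) || containsEdge a b (y :: r)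
  | _ => false

theorem _root_.SimpleGraph.Walk.containsEdge_support {G : SimpleGraph V} {u v : V}
    (W : G.Walk u v) (a b : V) :
    containsEdge a b W.support ↔ s(a, b) ∈ W.edges := by
  induction W with
  | nil => simp [containsEdge]
  | cons h W ih =>
    rw [Walk.support_cons, Walk.edges_cons, ← W.cons_tail_support]
    rw [← W.cons_tail_support] at ih
    simp only [containsEdge, Bool.or_eq_true, Bool.and_eq_true, beq_iff_eq, List.mem_cons, ih,
      Sym2.eq_iff]

variable (G : SimpleGraph V) [DecidableRel G.Adj]

/-- The one-edge extensions `w :: l` of a trail support `l` that add no repetition within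
`k` steps; `vs` lists the candidate vertices. -/
def trailExtensions (vs : List V) (k : ℕ) : List V → List (List V)
  | [] => []
  | x :: r =>
    (vs.filter fun w => G.Adj w x && !containsEdge w x (x :: r) && w ∉ (x :: r).take k).map
      (· :: x :: r)

/-- Every trail of length `n` with no vertex repeated within `k` steps has its support in
this list. -/
def trailSupports (vs : List V) (k : ℕ) : ℕ → List (List V)
  | 0 => vs.map ([·])
  | n + 1 => (trailSupports vs k n).flatMap (trailExtensions G vs k)

variable {G}

theorem support_mem_trailSupports {vs : List V} (hvs : ∀ v, v ∈ vs) {k : ℕ} {u v : V}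
    (W : G.Walk u v) (hW : W.IsTrail) (hk : NoRepeatWithin k W.support) :
    W.support ∈ trailSupports G vs k W.length := by
  induction W with
  | nil => simpa [trailSupports] using hvs _
  | @cons x y z h W ih =>
    rw [Walk.isTrail_cons] at hW
    rw [Walk.support_cons] at hk ⊢
    refine List.mem_flatMap.mpr ⟨W.support, ih hW.1 hk.of_cons, ?_⟩
    have hnew := hk.not_mem_take
    have hedge : ¬ containsEdge x y W.support := (W.containsEdge_support x y).not.mpr hW.2
    rw [← W.cons_tail_support]
    simpa [trailExtensions, hvs, h, hnew] using hedge

end TrailSearch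

theorem octahedron_trailSupports_twelve :
    trailSupports Octahedron (List.finRange 6) 4 12 = [] := by
  decide

/-- The octahedron admits no 4-locally self-avoiding Eulerian circuit:
every Eulerian circuit of the octahedron contains a (cyclic) subcycle of length at
most 4. -/
theorem octahedron_no_LSA4_eulerian_circuit :
    ∀ (u : Fin 6) (W : Octahedron.Walk u u), IsEulerianTrail W →
      ∃ i t, CyclicShortSubcycleAt W.support.dropLast i t := by
  intro u W hW
  have hlen : W.length = 12 := hW.length_eq_card_edgeFinset.trans octahedron_card_edgeFinset
  by_contra h
  have hmem := support_mem_trailSupports List.mem_finRange W hW.1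
    (noRepeatWithin_support_of_not_cyclicShortSubcycleAt W (by omega) h)
  rw [hlen, octahedron_trailSupports_twelve] at hmem
  exact List.not_mem_nil hmem

end Quartic
end

section
/- For every integer n ≥ 4, the n-antiprism admits a 4-locally self-avoiding Eulerian circuit. -/
open SimpleGraph

namespace Quartic

variable {V : Type*}

/-!
For `n ≥ 5`, run through the antiprism as a zigzag `u₀ w₀ u₁ w₁ … u_{n-1} w_{n-1}` along all spokes
and all slanted edges but one, then around the inner cycle, across the last slanted edge and around
the outer cycle. Every edge is used once, and every vertex occurs twice, the two occurrences being
at cyclic distance at least `n` from each other, so there is no subcycle of length at most 4.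
For `n = 4` an explicit circuit is checked by computation.
-/

section WalkOfSeq

variable (G : SimpleGraph V) (f : ℕ → V)

def walkOfSeq : ∀ m : ℕ, (∀ p < m, G.Adj (f p) (f (p + 1))) → G.Walk (f 0) (f m)
  | 0, _ => Walk.nil
  | m + 1, h => (walkOfSeq m fun p hp => h p (by omega)).concat (h m (by omega))

lemma support_walkOfSeq (m : ℕ) (h : ∀ p < m, G.Adj (f p) (f (p + 1))) :
    (walkOfSeq G f m h).support = (List.range (m + 1)).map f := by
  induction m with
  | zero => rfl
  | succ m ih => rw [walkOfSeq, Walk.support_concat, ih, List.range_succ (n := m + 1)]; simp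

lemma edges_walkOfSeq (m : ℕ) (h : ∀ p < m, G.Adj (f p) (f (p + 1))) :
    (walkOfSeq G f m h).edges = (List.range m).map (fun p => s(f p, f (p + 1))) := by
  induction m with
  | zero => rfl
  | succ m ih => rw [walkOfSeq, Walk.edges_concat, ih, List.range_succ]; simp

end WalkOfSeq

lemma not_cyclicShortSubcycleAt {l : List V} (hlen : 4 < l.length)
    (hgap : ∀ a b, a < b → b < l.length → l[a]? = l[b]? → 4 < b - a ∧ b - a + 4 < l.length)
    (i t : ℕ) : ¬ CyclicShortSubcycleAt l i t := by
  rintro ⟨ht1, ht4, -, heq, -⟩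
  set a := i % l.length
  have ha : a < l.length := Nat.mod_lt _ (by omega)
  have hb : (i + t) % l.length = (a + t) % l.length := by
    rw [Nat.add_mod, Nat.mod_eq_of_lt (a := t) (by omega)]
  rw [hb] at heq
  rcases Nat.lt_or_ge (a + t) l.length with hwrap | hwrap
  · rw [Nat.mod_eq_of_lt hwrap] at heq
    have := hgap a (a + t) (by omega) hwrap heq
    omega
  · rw [Nat.mod_eq_sub_mod hwrap, Nat.mod_eq_of_lt (by omega)] at heq
    have := hgap (a + t - l.length) a (by omega) ha heq.symm
    omega

theorem hasLSA4EulerianCircuit_of_seq {G : SimpleGraph V} (f : ℕ → V) (L : ℕ) (hL : 4 < L)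
    (hadj : ∀ p < L, G.Adj (f p) (f (p + 1))) (hclose : f L = f 0)
    (hinj : ∀ p < L, ∀ q < L, s(f p, f (p + 1)) = s(f q, f (q + 1)) → p = q)
    (hsurj : ∀ e ∈ G.edgeSet, ∃ p < L, e = s(f p, f (p + 1)))
    (hgap : ∀ a b, a < b → b < L → f a = f b → 4 < b - a ∧ b - a + 4 < L) :
    HasLSA4EulerianCircuit G := by
  let W := (walkOfSeq G f L hadj).copy rfl hclose
  have hedges : W.edges = (List.range L).map (fun p => s(f p, f (p + 1))) := by
    rw [Walk.edges_copy, edges_walkOfSeq]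
  have hsupport : W.support.dropLast = (List.range L).map f := by
    rw [Walk.support_copy, support_walkOfSeq, List.range_succ, List.map_append]
    exact List.dropLast_concat
  refine ⟨f 0, W, ⟨?_, fun e => ⟨fun he => ?_, fun he => W.edges_subset_edgeSet he⟩⟩, ?_⟩
  · rw [Walk.isTrail_def, hedges]
    exact List.nodup_range.map_on fun p hp q hq =>
      hinj p (List.mem_range.mp hp) q (List.mem_range.mp hq)
  · obtain ⟨p, hp, rfl⟩ := hsurj e he
    rw [hedges]
    exact List.mem_map_of_mem (List.mem_range.mpr hp)
  · rintro ⟨i, t, h⟩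
    rw [hsupport] at h
    refine not_cyclicShortSubcycleAt (by simpa using hL) (fun a b hab hb heq => ?_) i t h
    simp only [List.length_map, List.length_range] at hb ⊢
    simp only [List.getElem?_map, List.getElem?_range (hab.trans hb), List.getElem?_range hb,
      Option.map_some, Option.some.injEq] at heq
    exact hgap a b hab hb heq

def IsCyclicSucc (n i j : ℕ) : Prop := j = i + 1 ∨ (i + 1 = n ∧ j = 0)

lemma natCast_eq_natCast_iff_of_lt {n i j : ℕ} (hi : i < n) (hj : j < n) :
    (i : ZMod n) = j ↔ i = j := by
  rw [ZMod.natCast_eq_natCast_iff', Nat.mod_eq_of_lt hi, Nat.mod_eq_of_lt hj]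

lemma natCast_eq_natCast_add_one_iff {n i j : ℕ} (hi : i < n) (hj : j < n) :
    (j : ZMod n) = i + 1 ↔ IsCyclicSucc n i j := by
  rcases Nat.lt_or_ge (i + 1) n with hlt | hge
  · rw [← Nat.cast_succ, natCast_eq_natCast_iff_of_lt hj hlt, IsCyclicSucc]
    omega
  · rw [show (i : ZMod n) + 1 = ((0 : ℕ) : ZMod n) by
      rw [← Nat.cast_add_one, show i + 1 = n by omega, ZMod.natCast_self, Nat.cast_zero],
      natCast_eq_natCast_iff_of_lt hj (by omega), IsCyclicSucc]
    omega

namespace Antiprism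

/-- The relation defining `Antiprism n`, read on representatives `i, j < n` of `ZMod n`. -/
def CoordRel (n : ℕ) (s : Fin 2) (i : ℕ) (s' : Fin 2) (j : ℕ) : Prop :=
  (s = s' ∧ IsCyclicSucc n i j) ∨ (s = 0 ∧ s' = 1 ∧ (j = i ∨ IsCyclicSucc n j i))

lemma adj_natCast_iff {n i j : ℕ} {s s' : Fin 2} (hi : i < n) (hj : j < n) :
    (Antiprism n).Adj (s, (i : ZMod n)) (s', (j : ZMod n)) ↔
      ¬ (s = s' ∧ i = j) ∧ (CoordRel n s i s' j ∨ CoordRel n s' j s i) := by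
  simp only [Antiprism, fromRel_adj, ne_eq, Prod.mk.injEq, CoordRel,
    natCast_eq_natCast_iff_of_lt hi hj, natCast_eq_natCast_iff_of_lt hj hi,
    natCast_eq_natCast_add_one_iff hi hj, natCast_eq_natCast_add_one_iff hj hi]

def circuitSide (n p : ℕ) : Fin 2 :=
  if p < 2 * n then (if p % 2 = 0 then 0 else 1) else if p < 3 * n then 1 else 0

def circuitIndex (n p : ℕ) : ℕ :=
  if p < 2 * n then p / 2 else if p < 3 * n then p - 2 * n else if p < 4 * n then p - 3 * n else 0

/-- The circuit `u₀ w₀ u₁ w₁ … u_{n-1} w_{n-1} w₀ w₁ … w_{n-1} u₀ u₁ … u_{n-1} u₀`, where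
`u i = (0, i)` and `w i = (1, i)`. Its side and index are piecewise linear in the position,
so that all facts about it below reduce to linear arithmetic. -/
def circuit (n p : ℕ) : Fin 2 × ZMod n := (circuitSide n p, circuitIndex n p)

lemma circuitIndex_lt {n : ℕ} (hn : 0 < n) (p : ℕ) : circuitIndex n p < n := by
  unfold circuitIndex; split_ifs <;> omega

lemma circuit_eq_iff {n p i : ℕ} (hi : i < n) {s : Fin 2} :
    circuit n p = (s, (i : ZMod n)) ↔ circuitSide n p = s ∧ circuitIndex n p = i := by
  rw [circuit, Prod.mk.injEq, natCast_eq_natCast_iff_of_lt (circuitIndex_lt (by omega) p) hi]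

lemma circuit_eq_circuit_iff {n p q : ℕ} (hn : 0 < n) :
    circuit n p = circuit n q ↔
      circuitSide n p = circuitSide n q ∧ circuitIndex n p = circuitIndex n q :=
  circuit_eq_iff (circuitIndex_lt hn q)

lemma circuit_adj {n p : ℕ} (hn : 2 ≤ n) (hp : p < 4 * n) :
    (Antiprism n).Adj (circuit n p) (circuit n (p + 1)) := by
  rw [circuit, circuit, adj_natCast_iff (circuitIndex_lt (by omega) p)
    (circuitIndex_lt (by omega) (p + 1))]
  unfold CoordRel IsCyclicSucc circuitSide circuitIndex
  split_ifs <;> omega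

lemma circuit_four_mul (n : ℕ) : circuit n (4 * n) = circuit n 0 := by
  have hside : circuitSide n (4 * n) = circuitSide n 0 := by
    unfold circuitSide; split_ifs <;> omega
  have hindex : circuitIndex n (4 * n) = circuitIndex n 0 := by
    unfold circuitIndex; split_ifs <;> omega
  rw [circuit, circuit, hside, hindex]

lemma eq_of_circuit_edge_eq {n p q : ℕ} (hn : 3 ≤ n) (hp : p < 4 * n) (hq : q < 4 * n)
    (h : s(circuit n p, circuit n (p + 1)) = s(circuit n q, circuit n (q + 1))) : p = q := by
  simp only [Sym2.eq_iff, circuit_eq_circuit_iff (by omega : 0 < n)] at h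
  unfold circuitSide circuitIndex at h
  split_ifs at h <;> omega

lemma four_lt_sub_of_circuit_eq {n a b : ℕ} (hn : 5 ≤ n) (hab : a < b) (hb : b < 4 * n)
    (h : circuit n a = circuit n b) : 4 < b - a ∧ b - a + 4 < 4 * n := by
  rw [circuit_eq_circuit_iff (by omega)] at h
  unfold circuitSide circuitIndex at h
  split_ifs at h <;> omega

lemma exists_circuit_edge_eq_of_coordRel {n i j : ℕ} {s s' : Fin 2} (hi : i < n) (hj : j < n)
    (h : CoordRel n s i s' j) : ∃ p < 4 * n,
      s(circuit n p, circuit n (p + 1)) = s((s, (i : ZMod n)), (s', (j : ZMod n))) := by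
  suffices ∃ p < 4 * n,
      (circuitSide n p = s ∧ circuitIndex n p = i ∧
        circuitSide n (p + 1) = s' ∧ circuitIndex n (p + 1) = j) ∨
      (circuitSide n p = s' ∧ circuitIndex n p = j ∧
        circuitSide n (p + 1) = s ∧ circuitIndex n (p + 1) = i) by
    obtain ⟨p, hp, hpos⟩ := this
    refine ⟨p, hp, ?_⟩
    simp only [Sym2.eq_iff, circuit_eq_iff hi, circuit_eq_iff hj]
    tauto
  simp only [CoordRel, IsCyclicSucc] at h
  rcases h with ⟨rfl, hsucc⟩ | ⟨rfl, rfl, hspoke | hslant⟩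
  · rcases (by omega : s = 0 ∨ s = 1) with rfl | rfl
    · refine ⟨3 * n + i, ?_⟩
      unfold circuitSide circuitIndex; split_ifs <;> omega
    · refine ⟨if i + 1 = n then 2 * n - 1 else 2 * n + i, ?_⟩
      unfold circuitSide circuitIndex; split_ifs <;> omega
  · refine ⟨2 * i, ?_⟩
    unfold circuitSide circuitIndex; split_ifs <;> omega
  · refine ⟨if j + 1 = n then 3 * n - 1 else 2 * j + 1, ?_⟩
    unfold circuitSide circuitIndex; split_ifs <;> omega

lemma exists_eq_circuit_edge {n : ℕ} (hn : 0 < n) {e : Sym2 (Fin 2 × ZMod n)}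
    (he : e ∈ (Antiprism n).edgeSet) : ∃ p < 4 * n, e = s(circuit n p, circuit n (p + 1)) := by
  have : NeZero n := NeZero.of_pos hn
  induction e using Sym2.ind with | _ a b => ?_
  obtain ⟨s, x⟩ := a
  obtain ⟨s', y⟩ := b
  rw [← ZMod.natCast_zmod_val x, ← ZMod.natCast_zmod_val y] at he ⊢
  rw [mem_edgeSet, adj_natCast_iff (ZMod.val_lt x) (ZMod.val_lt y)] at he
  rcases he.2 with h | h
  · obtain ⟨p, hp, hpe⟩ := exists_circuit_edge_eq_of_coordRel x.val_lt y.val_lt h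
    exact ⟨p, hp, hpe.symm⟩
  · obtain ⟨p, hp, hpe⟩ := exists_circuit_edge_eq_of_coordRel y.val_lt x.val_lt h
    exact ⟨p, hp, Sym2.eq_swap.trans hpe.symm⟩

theorem hasLSA4EulerianCircuit_of_five_le {n : ℕ} (hn : 5 ≤ n) :
    HasLSA4EulerianCircuit (Antiprism n) :=
  hasLSA4EulerianCircuit_of_seq (circuit n) (4 * n) (by omega)
    (fun _ hp => circuit_adj (by omega) hp) (circuit_four_mul n)
    (fun _ hp _ hq => eq_of_circuit_edge_eq (by omega) hp hq)
    (fun _ he => exists_eq_circuit_edge (by omega) he)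
    (fun _ _ hab hb => four_lt_sub_of_circuit_eq hn hab hb)

-- Position 16 falls back to the default `(0, 0)`, which closes the circuit.
def circuitFour (p : ℕ) : Fin 2 × ZMod 4 :=
  [(0, 0), (0, 1), (0, 2), (1, 1), (1, 0), (0, 0), (0, 3), (0, 2), (1, 2), (1, 3), (1, 0), (0, 1),
    (1, 1), (1, 2), (0, 3), (1, 3)].getD p (0, 0)

theorem hasLSA4EulerianCircuit_four : HasLSA4EulerianCircuit (Antiprism 4) := by
  refine hasLSA4EulerianCircuit_of_seq circuitFour 16 (by omega) ?_ (by decide) (by decide) ?_ ?_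
  · simp only [Antiprism, fromRel_adj]
    decide
  · intro e he
    induction e using Sym2.ind with | _ a b => ?_
    simp only [mem_edgeSet, Antiprism, fromRel_adj] at he
    revert a b
    decide
  · have h : ∀ b < 16, ∀ a < b, circuitFour a = circuitFour b → 4 < b - a ∧ b - a + 4 < 16 := by
      decide
    exact fun a b hab hb => h b hb a hab

end Antiprism

/-- For every integer `n ≥ 4`, the `n`-antiprism admits a 4-locally
self-avoiding Eulerian circuit. -/
theorem antiprism_has_LSA4_eulerian_circuit :
    ∀ n : ℕ, 4 ≤ n → HasLSA4EulerianCircuit (Antiprism n) := by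
  intro n hn
  rcases hn.eq_or_lt with rfl | hn
  · exact Antiprism.hasLSA4EulerianCircuit_four
  · exact Antiprism.hasLSA4EulerianCircuit_of_five_le hn

end Quartic
end

section
/- Let G be a connected simple 4-regular graph with pairwise distinct vertices a, b, c, d such that ab, cd ∈ E(G) and the pair {ab, cd} forms an edge cut of G: deleting the two edges ab and cd disconnects G into exactly two connected components, one containing a and d and the other containing b and c. Let G' be the simple graph obtained from G by deleting the edges ab and cd, adding a new vertex u, and adding the four edges ua, ub, uc, ud (the pegging of the independent 2-edge-cut {ab, cd}). If G admits a 4-locally self-avoiding Eulerian circuit, then so does G'. -/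
/-!
Let `W` be a 4-locally self-avoiding Eulerian circuit of `G`. It crosses the cut twice, say along
`x₁x₂` and later along `x₃x₄`, so `W = R₁ · x₁x₂ · M · x₃x₄ · R₂`. Routing both crossings through
the new vertex `u` gives an Eulerian circuit `W'` of `G'` whose cyclic vertex sequence is that of
`W` with `u` inserted twice. Deleting the two copies of `u` only shortens cyclic distances, so a
repeated vertex at cyclic distance at most 4 in `W'` either comes from one in `W` or consists of
the two copies of `u`. The latter are at distance `|M| + 2` and `|R₂R₁| + 2`, and both are at
least 5: `x₁` and `x₂` lie on different sides of the cut, so the three other edges at `x₂` are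
traversed by `M` and the three other edges at `x₁` by `R₂R₁`.
-/

open SimpleGraph

namespace Quartic

variable {V : Type*}

/-- Entries of `l` at distinct positions whose cyclic distance is at most `k` are different. -/
def CyclicSeparated (k : ℕ) (l : List V) : Prop :=
  ∀ p q, p < q → q < l.length → (q - p ≤ k ∨ l.length + p - q ≤ k) → l[p]? ≠ l[q]?

theorem cyclicSeparated_iff {k : ℕ} {l : List V} :
    CyclicSeparated k l ↔ ∀ i t, 1 ≤ t → t ≤ k → t < l.length →
      l[i % l.length]? ≠ l[(i + t) % l.length]? := by
  constructor
  · intro h i t h1 hk hn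
    rw [← Nat.mod_add_mod]
    set p := i % l.length
    have hp : p < l.length := Nat.mod_lt _ (by omega)
    by_cases hwrap : p + t < l.length
    · rw [Nat.mod_eq_of_lt hwrap]
      exact h _ _ (by omega) hwrap (by omega)
    · rw [Nat.mod_eq_sub_mod (by omega), Nat.mod_eq_of_lt (by omega)]
      exact (h _ _ (by omega) hp (by omega)).symm
  · intro h p q hpq hq hgap
    rcases hgap with hgap | hgap
    · have := h p (q - p) (by omega) hgap (by omega)
      rwa [Nat.mod_eq_of_lt (by omega), Nat.add_sub_cancel' hpq.le, Nat.mod_eq_of_lt hq] at this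
    · have := h q (l.length + p - q) (by omega) hgap (by omega)
      rwa [Nat.mod_eq_of_lt hq, show q + (l.length + p - q) = p + l.length by omega,
        Nat.add_mod_right, Nat.mod_eq_of_lt (by omega), ne_comm] at this

/-- A repeat at minimal cyclic distance is a subcycle. -/
theorem exists_cyclicShortSubcycleAt_of_getElem?_eq {l : List V} {i t : ℕ} (h1 : 1 ≤ t)
    (h4 : t ≤ 4) (hn : t ≤ l.length) (he : l[i % l.length]? = l[(i + t) % l.length]?) :
    ∃ i t, CyclicShortSubcycleAt l i t := by
  induction t using Nat.strong_induction_on generalizing i with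
  | _ t ih =>
    by_cases hd : ∀ p q, p < q → q < t → l[(i + p) % l.length]? ≠ l[(i + q) % l.length]?
    · exact ⟨i, t, h1, h4, hn, he, hd⟩
    · push Not at hd
      obtain ⟨p, q, hpq, hqt, heq⟩ := hd
      refine ih (q - p) (by omega) (i := i + p) (by omega) (by omega) (by omega) ?_
      rwa [show i + p + (q - p) = i + q by omega]

theorem cyclicSeparated_of_not_exists {l : List V}
    (h : ¬∃ i t, CyclicShortSubcycleAt l i t) : CyclicSeparated 4 l :=
  cyclicSeparated_iff.2 fun _ _ h1 h4 hn he =>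
    h (exists_cyclicShortSubcycleAt_of_getElem?_eq h1 h4 hn.le he)

theorem CyclicSeparated.not_exists {l : List V} (h : CyclicSeparated 4 l)
    (hl : 5 ≤ l.length) : ¬∃ i t, CyclicShortSubcycleAt l i t := by
  rintro ⟨i, t, h1, h4, -, he, -⟩
  exact cyclicSeparated_iff.1 h i t h1 h4 (by omega) he

theorem CyclicSeparated.map {W : Type*} {k : ℕ} {l : List V} (h : CyclicSeparated k l)
    {f : V → W} (hf : Function.Injective f) : CyclicSeparated k (l.map f) := by
  intro p q hpq hq hgap heq
  rw [List.length_map] at hq hgap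
  simp only [List.getElem?_map] at heq
  exact h p q hpq hq hgap (Option.map_injective hf heq)

theorem getElem?_filter_countP_take {P : V → Bool} {l : List V} {p : ℕ} {a : V}
    (hp : l[p]? = some a) (ha : P a) : (l.filter P)[(l.take p).countP P]? = some a := by
  obtain ⟨hlt, rfl⟩ := List.getElem?_eq_some_iff.1 hp
  have hl : l.filter P = (l.take p ++ l[p] :: l.drop (p + 1)).filter P := by
    rw [← List.drop_eq_getElem_cons hlt, List.take_append_drop]
  rw [hl, List.filter_append, List.filter_cons_of_pos ha, List.getElem?_append_right
    (by rw [List.countP_eq_length_filter]), List.countP_eq_length_filter]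
  simp

/-- The entry at position `p` of `l` sits at position `(l.take p).countP P` of `l.filter P`, and
deleting entries can only shorten the cyclic distance between two remaining ones. -/
theorem CyclicSeparated.of_filter {k : ℕ} {P : V → Bool} {l : List V}
    (hf : CyclicSeparated k (l.filter P))
    (hout : ∀ p q, p < q → q < l.length → (q - p ≤ k ∨ l.length + p - q ≤ k) →
      ∀ a, P a = false → l[p]? = some a → l[q]? ≠ some a) :
    CyclicSeparated k l := by
  intro p q hpq hq hgap heq
  obtain ⟨a, ha⟩ : ∃ a, l[q]? = some a := ⟨l[q], List.getElem?_eq_getElem hq⟩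
  cases hPa : P a
  · exact hout p q hpq hq hgap a hPa (heq ▸ ha) ha
  have hfp := getElem?_filter_countP_take (heq ▸ ha) hPa
  have hfq := getElem?_filter_countP_take ha hPa
  obtain ⟨m, rfl⟩ : ∃ m, q = p + (m + 1) := ⟨q - p - 1, by omega⟩
  have hmid : (l.take (p + (m + 1))).countP P =
      (l.take p).countP P + ((l.drop p).take (m + 1)).countP P := by
    rw [List.take_add, List.countP_append]
  have hmid_le := (((l.drop p).take (m + 1)).countP_le_length (p := P)).trans
    (List.length_take_le _ _)
  have hmid_pos : 0 < ((l.drop p).take (m + 1)).countP P := by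
    rw [List.drop_eq_getElem_cons (by omega), List.take_succ_cons, List.countP_cons_of_pos]
    · omega
    · simpa [(List.getElem?_eq_some_iff.1 (heq ▸ ha)).2] using hPa
  have hpre := ((l.take p).countP_le_length (p := P)).trans (List.length_take_le _ _)
  have hlen : (l.filter P).length = (l.take (p + (m + 1))).countP P +
      (l.drop (p + (m + 1))).countP P := by
    rw [← List.countP_eq_length_filter, ← List.countP_append, List.take_append_drop]
  have hpost := (l.drop (p + (m + 1))).countP_le_length (p := P)
  rw [List.length_drop] at hpost
  exact hf _ _ (by omega) (List.getElem?_eq_some_iff.1 hfq).1 (by omega) (hfp.trans hfq.symm)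

theorem CyclicSeparated.insert_two [DecidableEq V] {k : ℕ} {A B C : List V} {u : V}
    (h : CyclicSeparated k (A ++ B ++ C)) (hA : u ∉ A) (hB : u ∉ B) (hC : u ∉ C)
    (hkB : k ≤ B.length) (hkAC : k ≤ A.length + C.length) :
    CyclicSeparated k (A ++ u :: (B ++ u :: C)) := by
  have hfilter : (A ++ u :: (B ++ u :: C)).filter (· != u) = A ++ B ++ C := by
    have hkeep : ∀ L : List V, u ∉ L → L.filter (· != u) = L := fun L hL =>
      List.filter_eq_self.2 fun x hx => bne_iff_ne.2 (ne_of_mem_of_not_mem hx hL)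
    simp [hkeep A hA, hkeep B hB, hkeep C hC]
  have hpos : ∀ p, (A ++ u :: (B ++ u :: C))[p]? = some u →
      p = A.length ∨ p = A.length + B.length + 1 := by
    intro p hp
    simp only [List.getElem?_append, List.getElem?_cons] at hp
    split_ifs at hp
    all_goals first | omega | exact absurd (List.mem_of_getElem? hp) ‹_›
  refine CyclicSeparated.of_filter (hfilter ▸ h) ?_
  intro p q hpq hq hgap a ha hp hq'
  obtain rfl : a = u := by simpa using ha
  have := hpos p hp
  have := hpos q hq'
  simp only [List.length_append, List.length_cons] at hgap
  omega

/-- `G'` arises from `G` by deleting the edges in `C` and joining a new vertex `inr ()` to all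
their endpoints. -/
structure IsPegging (G : SimpleGraph V) (G' : SimpleGraph (V ⊕ Unit)) (C : Set (Sym2 V)) :
    Prop where
  adj_inl_inl : ∀ v w, G'.Adj (.inl v) (.inl w) ↔ G.Adj v w ∧ s(v, w) ∉ C
  adj_inl_inr : ∀ v, G'.Adj (.inl v) (.inr ()) ↔ ∃ e ∈ C, v ∈ e

/-- `e'` is one of the edges of the pegging that replace the edge `e`. -/
def IsPegEdge (C : Set (Sym2 V)) (e : Sym2 V) (e' : Sym2 (V ⊕ Unit)) : Prop :=
  (e ∈ C ∧ ∃ v ∈ e, e' = s(.inl v, .inr ())) ∨ (e ∉ C ∧ e' = e.map .inl)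

def IsEdgeIndependent (C : Set (Sym2 V)) : Prop :=
  ∀ e ∈ C, ∀ f ∈ C, ∀ v, v ∈ e → v ∈ f → e = f

theorem isEdgeIndependent_pair {a b c d : V} (hac : a ≠ c) (had : a ≠ d) (hbc : b ≠ c)
    (hbd : b ≠ d) : IsEdgeIndependent ({s(a, b), s(c, d)} : Set (Sym2 V)) := by
  simp only [IsEdgeIndependent, Set.mem_insert_iff, Set.mem_singleton_iff]
  rintro e (rfl | rfl) f (rfl | rfl) v <;> simp <;> grind

theorem IsPegEdge.unique {C : Set (Sym2 V)} (hC : IsEdgeIndependent C) {e f : Sym2 V}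
    {e' : Sym2 (V ⊕ Unit)} (he : IsPegEdge C e e') (hf : IsPegEdge C f e') : e = f := by
  induction e using Sym2.ind
  induction f using Sym2.ind
  rcases he with ⟨heC, v, hve, rfl⟩ | ⟨heC, rfl⟩ <;>
    rcases hf with ⟨hfC, w, hwf, hw⟩ | ⟨hfC, hw⟩
  · obtain rfl : v = w := by simpa using hw
    exact hC _ heC _ hfC v hve hwf
  · simp at hw
  · simp at hw
  · exact Sym2.map.injective Sum.inl_injective hw

theorem IsPegging.mem_edgeSet_iff {G : SimpleGraph V} {G' : SimpleGraph (V ⊕ Unit)}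
    {C : Set (Sym2 V)} (hP : IsPegging G G' C) (hCG : C ⊆ G.edgeSet) (e' : Sym2 (V ⊕ Unit)) :
    e' ∈ G'.edgeSet ↔ ∃ e ∈ G.edgeSet, IsPegEdge C e e' := by
  have hnew : ∀ v, s(.inl v, .inr ()) ∈ G'.edgeSet ↔
      ∃ e ∈ G.edgeSet, IsPegEdge C e s(.inl v, .inr ()) := by
    intro v
    rw [mem_edgeSet, hP.adj_inl_inr]
    constructor
    · rintro ⟨e, heC, hv⟩
      exact ⟨e, hCG heC, .inl ⟨heC, v, hv, rfl⟩⟩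
    · rintro ⟨e, -, ⟨heC, w, hw, hvw⟩ | ⟨-, he⟩⟩
      · obtain rfl : v = w := by simpa using hvw
        exact ⟨e, heC, hw⟩
      · induction e using Sym2.ind
        simp at he
  induction e' using Sym2.ind with
  | _ p q =>
  rcases p with v | ⟨⟩ <;> rcases q with w | ⟨⟩
  · rw [mem_edgeSet, hP.adj_inl_inl]
    constructor
    · rintro ⟨h, hC⟩
      exact ⟨s(v, w), h, .inr ⟨hC, rfl⟩⟩
    · rintro ⟨e, he, ⟨-, z, -, hz⟩ | ⟨heC, hz⟩⟩
      · simp at hz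
      · induction e using Sym2.ind
        rcases Sym2.eq_iff.1 hz with ⟨h₁, h₂⟩ | ⟨h₁, h₂⟩ <;>
          simp only [Sum.inl.injEq] at h₁ h₂ <;> subst h₁ h₂
        · exact ⟨he, heC⟩
        · exact ⟨he.symm, Sym2.eq_swap ▸ heC⟩
  · exact hnew v
  · rw [Sym2.eq_swap]
    exact hnew w
  · simp only [mem_edgeSet, SimpleGraph.irrefl, false_iff, not_exists, not_and]
    rintro e - (⟨-, z, -, hz⟩ | ⟨-, hz⟩)
    · simp at hz
    · induction e using Sym2.ind
      simp at hz

end Quartic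

namespace SimpleGraph.Walk

open Quartic

variable {V : Type*} {G : SimpleGraph V} {G' : SimpleGraph (V ⊕ Unit)} {C : Set (Sym2 V)}

theorem reachable_deleteEdges_of_mem_support {x y v w : V} {p : G.Walk x y}
    (hp : ∀ e ∈ p.edges, e ∉ C) (hv : v ∈ p.support) (hw : w ∈ p.support) :
    (G.deleteEdges C).Reachable v w := by
  classical
  have hx : ∀ u ∈ p.support, (G.deleteEdges C).Reachable x u := fun u hu =>
    ⟨(p.toDeleteEdges C hp).takeUntil u (by simpa using hu)⟩
  exact (hx v hv).symm.trans (hx w hw)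

theorem exists_eq_append_cons_of_exists_mem (S : Set (Sym2 V)) {x y : V} (p : G.Walk x y)
    (h : ∃ e ∈ p.edges, e ∈ S) :
    ∃ (x₁ x₂ : V) (h₁ : G.Adj x₁ x₂) (q : G.Walk x x₁) (r : G.Walk x₂ y),
      p = q.append (cons h₁ r) ∧ (∀ e ∈ q.edges, e ∉ S) ∧ s(x₁, x₂) ∈ S := by
  induction p with
  | nil => simp at h
  | @cons v w _ hvw p ih =>
    by_cases hS : s(v, w) ∈ S
    · exact ⟨v, w, hvw, nil, p, rfl, by simp, hS⟩
    · obtain ⟨e, he, heS⟩ := h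
      rw [edges_cons, List.mem_cons] at he
      obtain ⟨x₁, x₂, h₁, q, r, rfl, hq, hx⟩ :=
        ih ⟨e, he.resolve_left (fun h => hS (h ▸ heS)), heS⟩
      refine ⟨x₁, x₂, h₁, cons hvw q, r, rfl, ?_, hx⟩
      simp only [edges_cons, List.mem_cons, forall_eq_or_imp]
      exact ⟨hS, hq⟩

theorem IsTrail.exists_eq_append_cons_append_cons {x y : V} {W : G.Walk x y} (hW : W.IsTrail)
    {e f : Sym2 V} (he : e ∈ W.edges) (hf : f ∈ W.edges) (hef : e ≠ f) :
    ∃ (x₁ x₂ x₃ x₄ : V) (h₁ : G.Adj x₁ x₂) (h₂ : G.Adj x₃ x₄) (R₁ : G.Walk x x₁)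
      (M : G.Walk x₂ x₃) (R₂ : G.Walk x₄ y),
      W = R₁.append (cons h₁ (M.append (cons h₂ R₂))) ∧
      s(x₁, x₂) ∈ ({e, f} : Set (Sym2 V)) ∧ s(x₃, x₄) ∈ ({e, f} : Set (Sym2 V)) ∧
      (∀ g ∈ R₁.edges, g ∉ ({e, f} : Set (Sym2 V))) ∧
      (∀ g ∈ M.edges, g ∉ ({e, f} : Set (Sym2 V))) ∧
      (∀ g ∈ R₂.edges, g ∉ ({e, f} : Set (Sym2 V))) := by
  obtain ⟨x₁, x₂, h₁, R₁, r, rfl, hR₁, he₁⟩ :=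
    exists_eq_append_cons_of_exists_mem {e, f} W ⟨e, he, by simp⟩
  have hr : ∃ g ∈ r.edges, g ∈ ({e, f} : Set (Sym2 V)) := by
    by_contra! hr
    have hon : ∀ g ∈ ({e, f} : Set (Sym2 V)), g ∈ (R₁.append (cons h₁ r)).edges →
        g = s(x₁, x₂) := by
      intro g hg hgW
      simp only [edges_append, edges_cons, List.mem_append, List.mem_cons] at hgW
      rcases hgW with hgW | hgW | hgW
      exacts [absurd hg (hR₁ g hgW), hgW, absurd hg (hr g hgW)]
    exact hef ((hon e (by simp) he).trans (hon f (by simp) hf).symm)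
  obtain ⟨x₃, x₄, h₂, M, R₂, rfl, hM, he₂⟩ := exists_eq_append_cons_of_exists_mem {e, f} r hr
  have hnd := hW.edges_nodup
  simp only [edges_append, edges_cons, List.nodup_append, List.nodup_cons, List.mem_append,
    List.mem_cons, not_or] at hnd
  refine ⟨x₁, x₂, x₃, x₄, h₁, h₂, R₁, M, R₂, rfl, he₁, he₂, hR₁, hM, fun g hg hgC => ?_⟩
  have hne : s(x₁, x₂) ≠ s(x₃, x₄) := hnd.2.1.1.2.1
  have hg' : g = s(x₁, x₂) ∨ g = s(x₃, x₄) := by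
    simp only [Set.mem_insert_iff, Set.mem_singleton_iff] at hgC he₁ he₂
    grind
  rcases hg' with rfl | rfl
  exacts [hnd.2.1.1.2.2 hg, hnd.2.1.2.2.1.1 hg]

/-- The walk in the pegging that follows `p`, making a detour through the new vertex instead of
traversing an edge of `C`. -/
noncomputable def peg (hP : IsPegging G G' C) : ∀ {x y : V}, G.Walk x y → G'.Walk (.inl x) (.inl y)
  | _, _, nil => nil
  | x, _, @cons _ _ _ w _ h p =>
    haveI := Classical.propDecidable
    if hC : s(x, w) ∈ C then
      cons ((hP.adj_inl_inr x).2 ⟨_, hC, Sym2.mem_mk_left x w⟩)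
        (cons ((hP.adj_inl_inr w).2 ⟨_, hC, Sym2.mem_mk_right x w⟩).symm (p.peg hP))
    else cons ((hP.adj_inl_inl x w).2 ⟨h, hC⟩) (p.peg hP)

variable (hP : IsPegging G G' C)

theorem peg_cons_of_mem {x w y : V} (h : G.Adj x w) (p : G.Walk w y) (hC : s(x, w) ∈ C) :
    (cons h p).peg hP = cons ((hP.adj_inl_inr x).2 ⟨_, hC, Sym2.mem_mk_left x w⟩)
        (cons ((hP.adj_inl_inr w).2 ⟨_, hC, Sym2.mem_mk_right x w⟩).symm (p.peg hP)) := by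
  simp [peg, hC]

theorem peg_append {x y z : V} (p : G.Walk x y) (q : G.Walk y z) :
    (p.append q).peg hP = (p.peg hP).append (q.peg hP) := by
  induction p with
  | nil => rfl
  | cons h p ih =>
    simp only [cons_append, peg, ih]
    split_ifs <;> rfl

theorem support_peg_of_forall_not_mem {x y : V} {p : G.Walk x y} (hp : ∀ e ∈ p.edges, e ∉ C) :
    (p.peg hP).support = p.support.map .inl := by
  induction p with
  | nil => rfl
  | cons h p ih =>
    simp only [edges_cons, List.mem_cons, forall_eq_or_imp] at hp
    simp [peg, hp.1, ih hp.2]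

theorem mem_edges_peg {x y : V} (p : G.Walk x y) (e' : Sym2 (V ⊕ Unit)) :
    e' ∈ (p.peg hP).edges ↔ ∃ e ∈ p.edges, IsPegEdge C e e' := by
  induction p with
  | nil => simp [peg]
  | cons h p ih =>
    simp only [peg]
    split_ifs with hC
    · simp [ih, IsPegEdge, hC, Sym2.eq_swap (a := Sum.inr ()), or_assoc]
    · simp [ih, IsPegEdge, hC]

theorem IsTrail.peg (hC : IsEdgeIndependent C) {x y : V} {p : G.Walk x y} (hp : p.IsTrail) :
    (p.peg hP).IsTrail := by
  induction p with
  | nil => simp [Walk.peg]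
  | @cons x w _ h p ih =>
    rw [isTrail_cons] at hp
    have hnew : ∀ e', IsPegEdge C s(x, w) e' → e' ∉ (p.peg hP).edges := by
      intro e' he' hmem
      obtain ⟨e, he, hpe⟩ := (mem_edges_peg hP p e').1 hmem
      exact hp.2 (IsPegEdge.unique hC he' hpe ▸ he)
    simp only [Walk.peg]
    split_ifs with hxw
    · simp only [isTrail_cons, edges_cons, List.mem_cons, not_or]
      refine ⟨⟨ih hp.1, hnew _ (.inl ⟨hxw, w, Sym2.mem_mk_right x w, Sym2.eq_swap⟩)⟩, ?_,
        hnew _ (.inl ⟨hxw, x, Sym2.mem_mk_left x w, rfl⟩)⟩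
      simpa using h.ne
    · exact (isTrail_cons _ _).2 ⟨ih hp.1, hnew _ (.inr ⟨hxw, rfl⟩)⟩

end SimpleGraph.Walk

namespace Quartic

variable {G : SimpleGraph V} {G' : SimpleGraph (V ⊕ Unit)} {C : Set (Sym2 V)}

theorem card_le_length_of_forall_mem {v : V} {s : Finset V} {L : List (Sym2 V)}
    (h : ∀ y ∈ s, s(v, y) ∈ L) : s.card ≤ L.length := by
  classical
  calc s.card = (s.image (s(v, ·))).card :=
        (Finset.card_image_of_injective _ fun _ _ => Sym2.congr_right.1).symm
    _ ≤ L.toFinset.card := Finset.card_le_card fun e he => by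
        obtain ⟨y, hy, rfl⟩ := Finset.mem_image.1 he
        exact List.mem_toFinset.2 (h y hy)
    _ ≤ L.length := List.toFinset_card_le L

/-- Every edge at `x₂` other than `x₁x₂` lies on the side of `x₂`, so `M` traverses all of them:
`R` cannot, as it passes through `x₁`. -/
theorem degree_le_length_add_one_of_not_reachable (hC : IsEdgeIndependent C) {x₁ x₂ : V}
    [Fintype (G.neighborSet x₂)] (h₁ : G.Adj x₁ x₂) (hx : s(x₁, x₂) ∈ C)
    (hsep : ¬(G.deleteEdges C).Reachable x₁ x₂)
    {a b c d : V} {M : G.Walk a b} {R : G.Walk c d} (hR : ∀ e ∈ R.edges, e ∉ C)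
    (hx₁ : x₁ ∈ R.support) (hcover : ∀ e ∈ G.edgeSet, e ∉ C → e ∈ M.edges ∨ e ∈ R.edges) :
    G.degree x₂ ≤ M.length + 1 := by
  classical
  have hM₂ : ∀ y ∈ (G.neighborFinset x₂).erase x₁, s(x₂, y) ∈ M.edges := by
    intro y hy
    obtain ⟨hyx₁, hy⟩ := Finset.mem_erase.1 hy
    rw [mem_neighborFinset] at hy
    have hyC : s(x₂, y) ∉ C := fun hyC => hyx₁ <| Sym2.congr_right.1 <|
      (hC _ hyC _ hx x₂ (Sym2.mem_mk_left _ _) (Sym2.mem_mk_right _ _)).trans Sym2.eq_swap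
    refine (hcover _ hy hyC).resolve_right fun hyR => hsep ?_
    exact Walk.reachable_deleteEdges_of_mem_support hR hx₁ (R.fst_mem_support_of_mem_edges hyR)
  have := card_le_length_of_forall_mem hM₂
  rw [Finset.card_erase_of_mem ((mem_neighborFinset _ _ _).2 h₁.symm),
    card_neighborFinset_eq_degree, Walk.length_edges] at this
  omega

theorem IsEulerianTrail.degree_le_length_add_one [G.LocallyFinite] (hC : IsEdgeIndependent C)
    {x x₁ x₂ x₃ x₄ : V} {h₁ : G.Adj x₁ x₂} {h₂ : G.Adj x₃ x₄} {R₁ : G.Walk x x₁}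
    {M : G.Walk x₂ x₃} {R₂ : G.Walk x₄ x}
    (hW : IsEulerianTrail (R₁.append (.cons h₁ (M.append (.cons h₂ R₂)))))
    (he₁ : s(x₁, x₂) ∈ C) (he₂ : s(x₃, x₄) ∈ C) (hR₁ : ∀ e ∈ R₁.edges, e ∉ C)
    (hM : ∀ e ∈ M.edges, e ∉ C) (hR₂ : ∀ e ∈ R₂.edges, e ∉ C)
    (hsep : ¬(G.deleteEdges C).Reachable x₁ x₂) :
    G.degree x₂ ≤ M.length + 1 ∧ G.degree x₁ ≤ R₁.length + R₂.length + 1 := by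
  have hR : ∀ e ∈ (R₂.append R₁).edges, e ∉ C := by
    simp only [Walk.edges_append, List.mem_append]
    exact fun e he => he.elim (hR₂ e) (hR₁ e)
  have hcover : ∀ e ∈ G.edgeSet, e ∉ C → e ∈ M.edges ∨ e ∈ (R₂.append R₁).edges := by
    intro e he heC
    have := (hW.2 e).1 he
    simp only [Walk.edges_append, Walk.edges_cons, List.mem_append, List.mem_cons] at this ⊢
    grind
  have hR₁₂ := degree_le_length_add_one_of_not_reachable hC h₁.symm (Sym2.eq_swap ▸ he₁)
    (fun h => hsep h.symm) hM M.start_mem_support fun e he heC => (hcover e he heC).symm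
  rw [Walk.length_append, add_comm R₂.length] at hR₁₂
  exact ⟨degree_le_length_add_one_of_not_reachable hC h₁ he₁ hsep hR
    (R₂.append R₁).end_mem_support hcover, hR₁₂⟩

theorem IsEulerianTrail.peg (hP : IsPegging G G' C) (hC : IsEdgeIndependent C)
    (hCG : C ⊆ G.edgeSet) {x y : V} {W : G.Walk x y} (hW : IsEulerianTrail W) :
    IsEulerianTrail (W.peg hP) := by
  refine ⟨hW.1.peg hP hC, fun e' => ?_⟩
  simp only [hP.mem_edgeSet_iff hCG, Walk.mem_edges_peg, hW.2]

theorem CircuitLSA4.peg (hP : IsPegging G G' C) {x x₁ x₂ x₃ x₄ : V} {h₁ : G.Adj x₁ x₂}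
    {h₂ : G.Adj x₃ x₄} {R₁ : G.Walk x x₁} {M : G.Walk x₂ x₃} {R₂ : G.Walk x₄ x}
    (he₁ : s(x₁, x₂) ∈ C) (he₂ : s(x₃, x₄) ∈ C) (hR₁ : ∀ e ∈ R₁.edges, e ∉ C)
    (hM : ∀ e ∈ M.edges, e ∉ C) (hR₂ : ∀ e ∈ R₂.edges, e ∉ C)
    (hMlen : 3 ≤ M.length) (hRlen : 3 ≤ R₁.length + R₂.length)
    (hW : CircuitLSA4 (R₁.append (.cons h₁ (M.append (.cons h₂ R₂))))) :
    CircuitLSA4 ((R₁.append (.cons h₁ (M.append (.cons h₂ R₂)))).peg hP) := by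
  classical
  have hne : R₂.support ≠ [] := Walk.support_ne_nil R₂
  have hsupp : (R₁.append (.cons h₁ (M.append (.cons h₂ R₂)))).support.dropLast =
      R₁.support ++ M.support ++ R₂.support.dropLast := by
    simp [Walk.support_append, List.dropLast_append_of_ne_nil hne]
  have hsupp' : ((R₁.append (.cons h₁ (M.append (.cons h₂ R₂)))).peg hP).support.dropLast =
      R₁.support.map .inl ++ .inr () ::
        (M.support.map .inl ++ .inr () :: (R₂.support.map .inl).dropLast) := by
    simp only [Walk.peg_append, Walk.peg_cons_of_mem hP _ _ he₁, Walk.peg_cons_of_mem hP _ _ he₂,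
      Walk.support_append, Walk.support_cons, List.tail_cons,
      Walk.support_peg_of_forall_not_mem hP hR₁, Walk.support_peg_of_forall_not_mem hP hM,
      Walk.support_peg_of_forall_not_mem hP hR₂]
    rw [List.dropLast_append_cons, List.dropLast_cons_of_ne_nil (by simp),
      List.dropLast_append_cons, List.dropLast_cons_of_ne_nil (by simp [hne])]
  unfold CircuitLSA4 at hW ⊢
  rw [hsupp] at hW
  rw [hsupp']
  have hsep := (cyclicSeparated_of_not_exists hW).map Sum.inl_injective (W := V ⊕ Unit)
  simp only [List.map_append, List.map_dropLast] at hsep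
  refine (hsep.insert_two (by simp) (by simp) (fun h => by simpa using List.dropLast_subset _ h)
    ?_ ?_).not_exists ?_ <;> simp <;> omega

theorem pegging_preserves_LSA4_general {V : Type} [Fintype V]
    (G : SimpleGraph V) [DecidableRel G.Adj]
    (hreg : ∀ v : V, G.degree v = 4)
    (a b c d : V)
    (hac : a ≠ c) (had' : a ≠ d) (hbc' : b ≠ c) (hbd : b ≠ d)
    (hab : G.Adj a b) (hcd : G.Adj c d)
    (hsep : ¬ (G.deleteEdges {s(a, b), s(c, d)}).Reachable a b)
    (hside1 : (G.deleteEdges {s(a, b), s(c, d)}).Reachable a d)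
    (hside2 : (G.deleteEdges {s(a, b), s(c, d)}).Reachable b c)
    (G' : SimpleGraph (V ⊕ Unit))
    (hG1 : ∀ v w : V, G'.Adj (Sum.inl v) (Sum.inl w) ↔
      (G.Adj v w ∧ s(v, w) ≠ s(a, b) ∧ s(v, w) ≠ s(c, d)))
    (hG2 : ∀ v : V, G'.Adj (Sum.inl v) (Sum.inr ()) ↔ (v = a ∨ v = b ∨ v = c ∨ v = d))
    (hG : HasLSA4EulerianCircuit G) :
    HasLSA4EulerianCircuit G' := by
  obtain ⟨z, W, hW, hLSA⟩ := hG
  set C : Set (Sym2 V) := {s(a, b), s(c, d)}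
  have hC : IsEdgeIndependent C := isEdgeIndependent_pair hac had' hbc' hbd
  have hP : IsPegging G G' C := ⟨fun v w => by simp [C, hG1], fun v => by simp [C, hG2, or_assoc]⟩
  have hCsep : ∀ v w, s(v, w) ∈ C → ¬(G.deleteEdges C).Reachable v w := by
    have hcd' : ¬(G.deleteEdges C).Reachable c d := fun h =>
      hsep (hside1.trans (h.symm.trans hside2.symm))
    simp only [C, Set.mem_insert_iff, Set.mem_singleton_iff, Sym2.eq_iff]
    rintro v w ((⟨rfl, rfl⟩ | ⟨rfl, rfl⟩) | (⟨rfl, rfl⟩ | ⟨rfl, rfl⟩))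
    exacts [hsep, fun h => hsep h.symm, hcd', fun h => hcd' h.symm]
  obtain ⟨x₁, x₂, x₃, x₄, h₁, h₂, R₁, M, R₂, rfl, he₁, he₂, hR₁, hM, hR₂⟩ :=
    hW.1.exists_eq_append_cons_append_cons ((hW.2 _).1 hab) ((hW.2 _).1 hcd)
      fun h => hac (Sym2.eq_iff.1 h |>.resolve_right fun h' => had' h'.1).1
  have hlen := hW.degree_le_length_add_one hC he₁ he₂ hR₁ hM hR₂ (hCsep _ _ he₁)
  rw [hreg, hreg] at hlen
  exact ⟨.inl z, _, hW.peg hP hC (by simp [C, Set.insert_subset_iff, hab, hcd]),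
    hLSA.peg hP he₁ he₂ hR₁ hM hR₂ (by omega) (by omega)⟩

/-- pegging an independent 2-edge-cut `{ab, cd}` of a connected
4-regular graph (deleting `ab` and `cd`, adding a new vertex `u = inr ()` and the
edges `ua, ub, uc, ud`) preserves the existence of a 4-locally self-avoiding
Eulerian circuit.  The edge-cut condition says deleting the two edges separates
`G` into exactly two components, one containing `a` and `d`, the other `b` and `c`. -/
theorem pegging_preserves_LSA4 {V : Type} [Fintype V] [DecidableEq V]
    (G : SimpleGraph V) [DecidableRel G.Adj]
    (hconn : G.Connected) (hreg : ∀ v : V, G.degree v = 4)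
    (a b c d : V)
    (hab' : a ≠ b) (hac : a ≠ c) (had' : a ≠ d) (hbc' : b ≠ c) (hbd : b ≠ d) (hcd' : c ≠ d)
    (hab : G.Adj a b) (hcd : G.Adj c d)
    (hsep : ¬ (G.deleteEdges {s(a, b), s(c, d)}).Reachable a b)
    (hside1 : (G.deleteEdges {s(a, b), s(c, d)}).Reachable a d)
    (hside2 : (G.deleteEdges {s(a, b), s(c, d)}).Reachable b c)
    (hall : ∀ v : V, (G.deleteEdges {s(a, b), s(c, d)}).Reachable a v ∨
      (G.deleteEdges {s(a, b), s(c, d)}).Reachable b v)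
    (G' : SimpleGraph (V ⊕ Unit))
    (hG1 : ∀ v w : V, G'.Adj (Sum.inl v) (Sum.inl w) ↔
      (G.Adj v w ∧ s(v, w) ≠ s(a, b) ∧ s(v, w) ≠ s(c, d)))
    (hG2 : ∀ v : V, G'.Adj (Sum.inl v) (Sum.inr ()) ↔ (v = a ∨ v = b ∨ v = c ∨ v = d))
    (hG : HasLSA4EulerianCircuit G) :
    HasLSA4EulerianCircuit G' :=
  pegging_preserves_LSA4_general G hreg a b c d hac had' hbc' hbd hab hcd hsep hside1 hside2 G' hG1
    hG2 hG

end Quartic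
end

section
/- Let G be a simple graph whose vertex set is partitioned into two sets V_A and V_B and whose edge set is partitioned as E(G) = E_A ∪ E_B ∪ {xs, yt}, where every edge in E_A has both endpoints in V_A, every edge in E_B has both endpoints in V_B, x and y are distinct vertices in V_A, and s and t are distinct vertices in V_B. Suppose the subgraph of G with edge set E_A admits a 4-locally self-avoiding Eulerian trail P from x to y of length at least 3, and the subgraph with edge set E_B admits a 4-locally self-avoiding Eulerian trail Q from t to s of length at least 3. Then the closed walk obtained by concatenating P (from x to y), the edge yt, Q (from t to s), and the edge sx is a 4-locally self-avoiding Eulerian circuit of G. -/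
/-! The vertices of `P` lie in `VA` and those of `Q` in `VB`. A short subcycle of the glued
circuit is a cyclic window of at most four steps whose two ends carry the same vertex. Since
both trails visit at least four vertices, such a window either lies inside `P` or inside `Q`,
where it is a subcycle of that trail, or it has one end in each trail, which is impossible as
`VA` and `VB` are disjoint. That the circuit is Eulerian is bookkeeping: `EA`, `EB` and the two
cut edges are pairwise disjoint and together make up `E(G)`. -/

open SimpleGraph

namespace Quartic

variable {V : Type*}

section Subcycles

variable {l l' : List V} {i t : ℕ}

theorem cyclicShortSubcycleAt_mod_length :
    CyclicShortSubcycleAt l (i % l.length) t ↔ CyclicShortSubcycleAt l i t := by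
  simp only [CyclicShortSubcycleAt, Nat.mod_mod, Nat.mod_add_mod]

theorem CyclicShortSubcycleAt.shortSubcycleAt (h : CyclicShortSubcycleAt l i t)
    (hit : i + t < l.length) : ShortSubcycleAt l i t := by
  obtain ⟨h1, h4, -, heq, hdist⟩ := h
  refine ⟨h1, h4, hit, ?_, fun p q hip hpq hq => ?_⟩
  · rwa [Nat.mod_eq_of_lt (by omega), Nat.mod_eq_of_lt hit] at heq
  · have := hdist (p - i) (q - i) (by omega) (by omega)
    rwa [Nat.add_sub_cancel' hip, Nat.add_sub_cancel' (by omega), Nat.mod_eq_of_lt (by omega),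
      Nat.mod_eq_of_lt (by omega)] at this

theorem ShortSubcycleAt.of_window_eq {i' : ℕ} (h : ShortSubcycleAt l i t)
    (hlen : i' + t < l'.length) (hwin : ∀ k ≤ t, l'[i' + k]? = l[i + k]?) :
    ShortSubcycleAt l' i' t := by
  obtain ⟨h1, h4, -, heq, hdist⟩ := h
  refine ⟨h1, h4, hlen, ?_, fun p q hip hpq hq => ?_⟩
  · have h0 := hwin 0 (Nat.zero_le _)
    rw [Nat.add_zero, Nat.add_zero] at h0
    rw [h0, hwin t le_rfl, heq]
  · have := hdist (i + (p - i')) (i + (q - i')) (by omega) (by omega) (by omega)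
    rwa [← hwin _ (by omega), ← hwin _ (by omega), Nat.add_sub_cancel' hip,
      Nat.add_sub_cancel' (by omega)] at this

theorem ShortSubcycleAt.of_append_left {l₂ : List V} (h : ShortSubcycleAt (l ++ l₂) i t)
    (hit : i + t < l.length) : ShortSubcycleAt l i t :=
  h.of_window_eq hit fun k hk => (List.getElem?_append_left (by omega)).symm

theorem ShortSubcycleAt.of_append_right {l₁ : List V} (h : ShortSubcycleAt (l₁ ++ l) i t)
    (hi : l₁.length ≤ i) : ShortSubcycleAt l (i - l₁.length) t :=
  h.of_window_eq (by have := h.2.2.1; simp at this; omega) fun k hk => by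
    rw [List.getElem?_append_right (by omega)]
    congr 1
    omega

theorem getElem?_append_ne_of_disjoint {l₁ l₂ : List V} (hd : l₁.Disjoint l₂) {a b : ℕ}
    (ha : a < l₁.length) (hb : l₁.length ≤ b) (hb' : b < (l₁ ++ l₂).length) :
    (l₁ ++ l₂)[a]? ≠ (l₁ ++ l₂)[b]? := by
  rw [List.getElem?_append_left ha, List.getElem?_append_right hb,
    List.getElem?_eq_getElem ha, List.getElem?_eq_getElem (by simp at hb'; omega)]
  exact fun h => hd (List.getElem_mem ha) (Option.some_injective _ h ▸ List.getElem_mem _)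

theorem not_cyclicShortSubcycleAt_append {l₁ l₂ : List V} (hd : l₁.Disjoint l₂)
    (h₁ : 4 ≤ l₁.length) (h₂ : 4 ≤ l₂.length)
    (hn₁ : ¬ ∃ i t, ShortSubcycleAt l₁ i t) (hn₂ : ¬ ∃ i t, ShortSubcycleAt l₂ i t) :
    ¬ ∃ i t, CyclicShortSubcycleAt (l₁ ++ l₂) i t := by
  rintro ⟨i, t, h⟩
  rw [← cyclicShortSubcycleAt_mod_length] at h
  set j := i % (l₁ ++ l₂).length
  have hlen : (l₁ ++ l₂).length = l₁.length + l₂.length := List.length_append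
  have hj : j < (l₁ ++ l₂).length := Nat.mod_lt _ (by omega)
  by_cases hwrap : j + t < (l₁ ++ l₂).length
  · have hs := h.shortSubcycleAt hwrap
    rcases lt_or_ge (j + t) l₁.length with hleft | hcross
    · exact hn₁ ⟨j, t, hs.of_append_left hleft⟩
    rcases le_or_gt l₁.length j with hright | hcross'
    · exact hn₂ ⟨_, t, hs.of_append_right hright⟩
    exact getElem?_append_ne_of_disjoint hd hcross' hcross hwrap hs.2.2.2.1
  · obtain ⟨-, ht, -, heq, -⟩ := h
    rw [Nat.mod_eq_of_lt hj, Nat.mod_eq_sub_mod (by omega), Nat.mod_eq_of_lt (by omega)] at heq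
    exact getElem?_append_ne_of_disjoint hd (by omega) (by omega) hj heq.symm

end Subcycles

section Gluing

variable {G : SimpleGraph V}

theorem support_subset_of_forall_mem_edges {S : Set V} {u v : V} (p : G.Walk u v)
    (hv : v ∈ S) (hS : ∀ e ∈ p.edges, ∀ w ∈ e, w ∈ S) : ∀ w ∈ p.support, w ∈ S := by
  intro w hw
  rcases Walk.mem_support_iff_exists_mem_edges.1 hw with rfl | ⟨e, he, hwe⟩
  exacts [hv, hS e he w hwe]

theorem isEulerianTrail_iff {u v : V} (W : G.Walk u v) :
    IsEulerianTrail W ↔ W.edges.Nodup ∧ ∀ e ∈ G.edgeSet, e ∈ W.edges :=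
  ⟨fun h => ⟨h.1.edges_nodup, fun e => (h.2 e).1⟩,
    fun h => ⟨⟨h.1⟩, fun e => ⟨h.2 e, fun he => W.edges_subset_edgeSet he⟩⟩⟩

theorem IsEulerianTrail.mem_edges_iff {E : Set (Sym2 V)} {u v : V}
    {W : (fromEdgeSet E).Walk u v} (hW : IsEulerianTrail W) {e : Sym2 V} :
    e ∈ W.edges ↔ e ∈ E ∧ ¬ e.IsDiag := by
  rw [← hW.2, edgeSet_fromEdgeSet, Set.mem_sdiff, Sym2.mem_diagSet]

variable {x y s₀ t : V}

def glue (P : G.Walk x y) (hyt : G.Adj y t) (Q : G.Walk t s₀) (hsx : G.Adj s₀ x) :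
    G.Walk x x :=
  P.append ((Walk.cons hyt Q).concat hsx)

@[simp]
theorem support_glue (P : G.Walk x y) (hyt : G.Adj y t) (Q : G.Walk t s₀) (hsx : G.Adj s₀ x) :
    (glue P hyt Q hsx).support = P.support ++ Q.support ++ [x] := by
  simp [glue, Walk.support_append, Walk.support_concat]

@[simp]
theorem edges_glue (P : G.Walk x y) (hyt : G.Adj y t) (Q : G.Walk t s₀) (hsx : G.Adj s₀ x) :
    (glue P hyt Q hsx).edges = P.edges ++ s(y, t) :: (Q.edges ++ [s(s₀, x)]) := by
  simp [glue, Walk.edges_append, Walk.edges_concat]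

theorem isEulerianTrail_glue {EA EB : Set (Sym2 V)}
    (hE : G.edgeSet = EA ∪ EB ∪ {s(x, s₀), s(y, t)}) (hEdisj : Disjoint EA EB)
    (hcut1 : s(x, s₀) ∉ EA ∪ EB) (hcut2 : s(y, t) ∉ EA ∪ EB) (hcut3 : s(x, s₀) ≠ s(y, t))
    {P : (fromEdgeSet EA).Walk x y} (hP : IsEulerianTrail P)
    {Q : (fromEdgeSet EB).Walk t s₀} (hQ : IsEulerianTrail Q)
    (hPG : ∀ e ∈ P.edges, e ∈ G.edgeSet) (hQG : ∀ e ∈ Q.edges, e ∈ G.edgeSet)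
    (hyt : G.Adj y t) (hsx : G.Adj s₀ x) :
    IsEulerianTrail (glue (P.transfer G hPG) hyt (Q.transfer G hQG) hsx) := by
  rw [isEulerianTrail_iff, edges_glue, Walk.edges_transfer, Walk.edges_transfer]
  simp only [Set.mem_union, not_or] at hcut1 hcut2
  refine ⟨?_, fun e he => ?_⟩
  · rw [Set.disjoint_left] at hEdisj
    simp only [List.nodup_append, List.nodup_cons, hP.1.edges_nodup, hQ.1.edges_nodup,
      List.mem_append, List.mem_cons, hP.mem_edges_iff, hQ.mem_edges_iff, Sym2.eq_swap (a := s₀)]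
    aesop
  · have hnd := G.not_isDiag_of_mem_edgeSet he
    rw [hE] at he
    simp only [List.mem_append, List.mem_cons, hP.mem_edges_iff,
      hQ.mem_edges_iff, Sym2.eq_swap (a := s₀)]
    aesop

end Gluing

theorem glue_across_two_edge_cut_general {V : Type}
    (G : SimpleGraph V) (VA VB : Set V)
    (hVdisj : Disjoint VA VB)
    (EA EB : Set (Sym2 V)) (x y s₀ t : V)
    (hyA : y ∈ VA) (hsB : s₀ ∈ VB)
    (hE : G.edgeSet = EA ∪ EB ∪ {s(x, s₀), s(y, t)})
    (hEdisj : Disjoint EA EB)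
    (hcut1 : s(x, s₀) ∉ EA ∪ EB) (hcut2 : s(y, t) ∉ EA ∪ EB)
    (hcut3 : s(x, s₀) ≠ s(y, t))
    (hAin : ∀ e ∈ EA, ∀ v ∈ e, v ∈ VA) (hBin : ∀ e ∈ EB, ∀ v ∈ e, v ∈ VB)
    (P : (SimpleGraph.fromEdgeSet EA).Walk x y)
    (hP : IsEulerianTrail P) (hPl : TrailLSA4 P) (hPlen : 3 ≤ P.length)
    (Q : (SimpleGraph.fromEdgeSet EB).Walk t s₀)
    (hQ : IsEulerianTrail Q) (hQl : TrailLSA4 Q) (hQlen : 3 ≤ Q.length) :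
    ∃ W : G.Walk x x, W.support = P.support ++ Q.support ++ [x] ∧
      IsEulerianTrail W ∧ CircuitLSA4 W := by
  have hPG : ∀ e ∈ P.edges, e ∈ G.edgeSet := fun e he => by
    rw [hE]; exact .inl (.inl (hP.mem_edges_iff.1 he).1)
  have hQG : ∀ e ∈ Q.edges, e ∈ G.edgeSet := fun e he => by
    rw [hE]; exact .inl (.inr (hQ.mem_edges_iff.1 he).1)
  have hyt : G.Adj y t := by rw [← mem_edgeSet, hE]; simp
  have hsx : G.Adj s₀ x := by rw [← mem_edgeSet, hE, Sym2.eq_swap]; simp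
  have hPA : ∀ v ∈ P.support, v ∈ VA :=
    support_subset_of_forall_mem_edges P hyA fun e he => hAin e (hP.mem_edges_iff.1 he).1
  have hQB : ∀ v ∈ Q.support, v ∈ VB :=
    support_subset_of_forall_mem_edges Q hsB fun e he => hBin e (hQ.mem_edges_iff.1 he).1
  refine ⟨glue (P.transfer G hPG) hyt (Q.transfer G hQG) hsx, by simp,
    isEulerianTrail_glue hE hEdisj hcut1 hcut2 hcut3 hP hQ hPG hQG hyt hsx, ?_⟩
  rw [CircuitLSA4, support_glue, List.dropLast_concat, Walk.support_transfer,
    Walk.support_transfer]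
  exact not_cyclicShortSubcycleAt_append
    (fun v hvP hvQ => hVdisj.ne_of_mem (hPA v hvP) (hQB v hvQ) rfl)
    (by simp; omega) (by simp; omega) hPl hQl

/-- gluing two 4-locally self-avoiding Eulerian trails across a 2-edge-cut.
The vertex set is partitioned into `VA` and `VB`, and `E(G) = EA ∪ EB ∪ {xs₀, yt}` where
edges of `EA` (resp. `EB`) lie in `VA` (resp. `VB`).  If the subgraph with edge set `EA`
has a 4-locally self-avoiding Eulerian trail `P` from `x` to `y` of length ≥ 3 and the
subgraph with edge set `EB` has one, `Q`, from `t` to `s₀` of length ≥ 3, then the closed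
walk `x P y, yt, t Q s₀, s₀x` (characterised by its support `P.support ++ Q.support ++ [x]`)
is a 4-locally self-avoiding Eulerian circuit of `G`. -/
theorem glue_across_two_edge_cut {V : Type} [Fintype V]
    (G : SimpleGraph V) (VA VB : Set V)
    (hVcover : VA ∪ VB = Set.univ) (hVdisj : Disjoint VA VB)
    (EA EB : Set (Sym2 V)) (x y s₀ t : V)
    (hxy : x ≠ y) (hst : s₀ ≠ t)
    (hxA : x ∈ VA) (hyA : y ∈ VA) (hsB : s₀ ∈ VB) (htB : t ∈ VB)
    (hE : G.edgeSet = EA ∪ EB ∪ {s(x, s₀), s(y, t)})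
    (hEdisj : Disjoint EA EB)
    (hcut1 : s(x, s₀) ∉ EA ∪ EB) (hcut2 : s(y, t) ∉ EA ∪ EB)
    (hcut3 : s(x, s₀) ≠ s(y, t))
    (hAin : ∀ e ∈ EA, ∀ v ∈ e, v ∈ VA) (hBin : ∀ e ∈ EB, ∀ v ∈ e, v ∈ VB)
    (P : (SimpleGraph.fromEdgeSet EA).Walk x y)
    (hP : IsEulerianTrail P) (hPl : TrailLSA4 P) (hPlen : 3 ≤ P.length)
    (Q : (SimpleGraph.fromEdgeSet EB).Walk t s₀)
    (hQ : IsEulerianTrail Q) (hQl : TrailLSA4 Q) (hQlen : 3 ≤ Q.length) :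
    ∃ W : G.Walk x x, W.support = P.support ++ Q.support ++ [x] ∧
      IsEulerianTrail W ∧ CircuitLSA4 W :=
  glue_across_two_edge_cut_general G VA VB hVdisj EA EB x y s₀ t hyA hsB hE hEdisj hcut1 hcut2 hcut3
    hAin hBin P hP hPl hPlen Q hQ hQl hQlen

end Quartic
end

section
/- Let G be a simple graph with at least one edge that admits a 4-locally self-avoiding Eulerian circuit, let v be a vertex of G of positive degree, and let L = (ℓ_1, …, ℓ_k) be a sequence with each ℓ_i ∈ {1, 2, 3, 4} and ℓ_1 + ⋯ + ℓ_k = |E(G)|. Then G has a P_{(L,v)}-decomposition. -/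
open SimpleGraph

namespace Quartic

variable {V : Type*}

/-! Rotate the Eulerian circuit so that it starts at `v` and cut it into consecutive segments of
lengths `ℓ₁, …, ℓ_k`. The segments are edge-disjoint and cover `E(G)` because the circuit is
Eulerian. Each segment has at most four edges, and two equal vertices at most four steps apart on
the circuit would, taking the closest such pair, bound a subcycle of length at most four; hence
every segment is a path. -/

theorem _root_.List.disjoint_take_drop_take_drop {α : Type*} {l : List α} (hl : l.Nodup)
    {a b c d : ℕ} (h : a + b ≤ c) : List.Disjoint ((l.drop a).take b) ((l.drop c).take d) := by
  rw [List.take_drop]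
  exact fun _ hx hy =>
    List.disjoint_take_drop hl h (List.mem_of_mem_drop hx) (List.mem_of_mem_take hy)

theorem _root_.List.getElem_mem_take_drop {α : Type*} {l : List α} {a b m : ℕ} (ha : a ≤ m)
    (hb : m < a + b) (hm : m < l.length) : l[m] ∈ (l.drop a).take b := by
  rw [List.mem_iff_getElem]
  exact ⟨m - a, by simp only [List.length_take, List.length_drop]; omega,
    by simp [Nat.add_sub_cancel' ha]⟩

theorem _root_.Fin.monotone_partialSum {M : Type*} [AddMonoid M] [PartialOrder M]
    [CanonicallyOrderedAdd M] {n : ℕ} (f : Fin n → M) : Monotone (Fin.partialSum f) :=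
  Fin.monotone_iff_le_succ.mpr fun i => by rw [Fin.partialSum_succ]; exact le_self_add

theorem _root_.Fin.partialSum_last {M : Type*} [AddCommMonoid M] {n : ℕ} (f : Fin n → M) :
    Fin.partialSum f (Fin.last n) = ∑ i, f i := by
  rw [Fin.partialSum, Fin.val_last, List.take_of_length_le (by simp), List.sum_ofFn]

theorem _root_.Fin.exists_castSucc_le_and_lt_succ {α : Type*} [LinearOrder α] {n : ℕ}
    (s : Fin (n + 1) → α) {x : α} (h0 : s 0 ≤ x) (hlast : x < s (Fin.last n)) :
    ∃ i : Fin n, s i.castSucc ≤ x ∧ x < s i.succ := by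
  by_contra! h
  have hle (j : Fin (n + 1)) : s j ≤ x := Fin.induction h0 (fun i hi => h i hi) j
  exact (hle _).not_gt hlast

section Walks

variable {G : SimpleGraph V} {u w : V}

theorem _root_.SimpleGraph.Walk.isPath_take_drop (W : G.Walk u w) {a b : ℕ}
    (hab : a + b ≤ W.length)
    (hinj : ∀ p q, a ≤ p → p < q → q ≤ a + b → W.getVert p ≠ W.getVert q) :
    ((W.drop a).take b).IsPath := by
  rw [← Walk.IsPath.getVert_injOn_iff]
  have hlen : ((W.drop a).take b).length = b := by
    simp only [Walk.take_length, Walk.drop_length]; omega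
  intro p hp q hq hpq
  simp only [Set.mem_ofPred_eq, hlen] at hp hq
  simp only [Walk.take_getVert, Walk.drop_getVert, min_eq_right hp, min_eq_right hq] at hpq
  by_contra hne
  rcases lt_or_gt_of_ne hne with h | h
  · exact hinj _ _ (by omega) (by omega) (by omega) hpq
  · exact hinj _ _ (by omega) (by omega) (by omega) hpq.symm

variable [DecidableEq V]

theorem _root_.SimpleGraph.Walk.IsEulerian.rotate {c : G.Walk u u} (hc : c.IsEulerian)
    (hw : w ∈ c.support) : (c.rotate w hw).IsEulerian :=
  fun e he => ((c.rotate_edges w hw).perm.count_eq e).trans (hc e he)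

theorem _root_.SimpleGraph.Walk.IsEulerian.card_edgeFinset [Fintype G.edgeSet] {p : G.Walk u w}
    (hp : p.IsEulerian) : G.edgeFinset.card = p.length := by
  rw [← hp.edgesFinset_eq]
  exact p.length_edges

theorem pathChain_of_isEulerian {W : G.Walk u w} (hW : W.IsEulerian) {k M : ℕ}
    (ℓ : Fin k → ℕ) (hℓ : ∀ i, ℓ i ≤ M) (hsum : ∑ i, ℓ i = W.length)
    (hloc : ∀ p q, p < q → q ≤ p + M → q ≤ W.length → W.getVert p ≠ W.getVert q) :
    PathChain G u w ℓ := by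
  set s := Fin.partialSum ℓ
  have hs_succ (i : Fin k) : s i.succ = s i.castSucc + ℓ i := Fin.partialSum_succ ℓ i
  have hs_last : s (Fin.last k) = W.length := (Fin.partialSum_last ℓ).trans hsum
  have hmono : Monotone s := Fin.monotone_partialSum ℓ
  have hs_le (i : Fin k) : s i.castSucc + ℓ i ≤ W.length :=
    hs_succ i ▸ hs_last ▸ hmono (Fin.le_last _)
  refine ⟨fun j => W.getVert (s j),
    fun i => ((W.drop (s i.castSucc)).take (ℓ i)).copy rfl (by rw [Walk.drop_getVert, ← hs_succ]),
    by simp [s], by simp only [hs_last, Walk.getVert_length], fun i => ?_, fun i => ?_,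
    fun i j hij e hei hej => ?_, fun e he => ?_⟩
  · rw [Walk.isPath_copy]
    exact W.isPath_take_drop (hs_le i) fun p q _ hpq hq =>
      hloc p q hpq (by have := hℓ i; omega) (by have := hs_le i; omega)
  · have := hs_le i
    simp only [Walk.length_copy, Walk.take_length, Walk.drop_length]; omega
  · simp only [Walk.edges_copy, Walk.edges_take, Walk.edges_drop] at hei hej
    have hdisj {a b : Fin k} (hab : a < b) :=
      List.disjoint_take_drop_take_drop (b := ℓ a) (d := ℓ b) hW.isTrail.edges_nodup
        (hs_succ a ▸ hmono (Fin.succ_le_castSucc_iff.mpr hab))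
    rcases lt_or_gt_of_ne hij with h | h
    · exact hdisj h hei hej
    · exact hdisj h hej hei
  · obtain ⟨m, hm, rfl⟩ := List.getElem_of_mem (hW.mem_edges_iff.mpr he)
    obtain ⟨i, hi₁, hi₂⟩ := Fin.exists_castSucc_le_and_lt_succ s (by simp [s])
      (by simpa [hs_last] using hm)
    refine ⟨i, ?_⟩
    simpa only [Walk.edges_copy, Walk.edges_take, Walk.edges_drop] using
      List.getElem_mem_take_drop hi₁ (hs_succ i ▸ hi₂) hm

end Walks

section CyclicSubcycles

variable {l : List V}

theorem CyclicShortSubcycleAt.of_rotate {m i t : ℕ}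
    (h : CyclicShortSubcycleAt (l.rotate m) i t) : CyclicShortSubcycleAt l (i + m) t := by
  obtain ⟨ht1, ht4, htl, heq, hdist⟩ := h
  rw [List.length_rotate] at htl
  have hl : 0 < l.length := by omega
  have key (x : ℕ) : (l.rotate m)[x % (l.rotate m).length]? = l[(x + m) % l.length]? := by
    rw [List.length_rotate, List.getElem?_rotate (Nat.mod_lt _ hl), Nat.mod_add_mod]
  refine ⟨ht1, ht4, htl, ?_, fun p q hpq hqt => ?_⟩
  · rw [← key, add_right_comm, ← key]
    exact heq
  · rw [add_right_comm i m p, add_right_comm i m q, ← key, ← key]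
    exact hdist p q hpq hqt

theorem exists_cyclicShortSubcycleAt_of_isRotated {l' : List V} (h : l' ~r l) :
    (∃ i t, CyclicShortSubcycleAt l' i t) → ∃ i t, CyclicShortSubcycleAt l i t := by
  obtain ⟨m, rfl⟩ := h.symm
  rintro ⟨i, t, hit⟩
  exact ⟨i + m, t, hit.of_rotate⟩

theorem getElem?_mod_ne_of_not_cyclicShortSubcycleAt
    (hl : ¬ ∃ i t, CyclicShortSubcycleAt l i t) {t : ℕ} (ht1 : 1 ≤ t) (ht4 : t ≤ 4)
    (htl : t ≤ l.length) (i : ℕ) : l[i % l.length]? ≠ l[(i + t) % l.length]? := by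
  induction t using Nat.strong_induction_on generalizing i with
  | _ t ih =>
    intro heq
    refine hl ⟨i, t, ht1, ht4, htl, heq, fun p q hpq hqt hpq_eq => ?_⟩
    refine ih (q - p) (by omega) (by omega) (by omega) (by omega) (i + p) ?_
    rwa [show i + p + (q - p) = i + q by omega]

end CyclicSubcycles

section Circuits

variable {G : SimpleGraph V} {u : V}

theorem getElem?_dropLast_support_mod (W : G.Walk u u) (hW : 0 < W.length) {m : ℕ}
    (hm : m ≤ W.length) : W.support.dropLast[m % W.length]? = some (W.getVert m) := by
  have hmod : m % W.length < W.length := Nat.mod_lt _ hW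
  have hvert : W.getVert (m % W.length) = W.getVert m := by
    rcases hm.lt_or_eq with hlt | rfl
    · rw [Nat.mod_eq_of_lt hlt]
    · rw [Nat.mod_self, Walk.getVert_zero, Walk.getVert_length]
  rw [List.getElem?_dropLast, if_pos (by simpa using hmod), ← hvert,
    W.getVert_eq_support_getElem? hmod.le]

theorem CircuitLSA4.getVert_ne {W : G.Walk u u} (hW : CircuitLSA4 W) {p q : ℕ} (hpq : p < q)
    (hq4 : q ≤ p + 4) (hq : q ≤ W.length) : W.getVert p ≠ W.getVert q := by
  have hlen : W.support.dropLast.length = W.length := by simp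
  have hne := getElem?_mod_ne_of_not_cyclicShortSubcycleAt hW (t := q - p) (by omega)
    (by omega) (by omega) p
  rwa [hlen, Nat.add_sub_cancel' hpq.le, getElem?_dropLast_support_mod W (by omega) (by omega),
    getElem?_dropLast_support_mod W (by omega) hq, Ne, Option.some_inj] at hne

theorem CircuitLSA4.rotate [DecidableEq V] {v : V} {W : G.Walk u u} (hW : CircuitLSA4 W)
    (hv : v ∈ W.support) : CircuitLSA4 (W.rotate v hv) := by
  have hrot {x : V} (c : G.Walk x x) : c.support.dropLast ~r c.support.tail :=
    List.IsRotated.dropLast_tail c.support_ne_nil (by simp)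
  exact fun h => hW (exists_cyclicShortSubcycleAt_of_isRotated
    (((hrot _).trans (W.support_rotate v hv)).trans (hrot W).symm) h)

end Circuits

theorem cut_circuit_into_paths_general {V : Type} [Fintype V] [DecidableEq V]
    (G : SimpleGraph V) [DecidableRel G.Adj]
    (hG : HasLSA4EulerianCircuit G)
    (v : V) (hv : 0 < G.degree v)
    (k : ℕ) (ℓ : Fin k → ℕ)
    (hbound : ∀ i, 1 ≤ ℓ i ∧ ℓ i ≤ 4) (hsum : ∑ i, ℓ i = G.edgeFinset.card) :
    PathChain G v v ℓ := by
  obtain ⟨u, C, ⟨hCtrail, hCedges⟩, hC⟩ := hG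
  have hCeul : C.IsEulerian := C.isEulerian_iff.mpr ⟨hCtrail, fun e => (hCedges e).mp⟩
  obtain ⟨w, hvw⟩ := (G.degree_pos_iff_exists_adj v).mp hv
  have hvC : v ∈ C.support := C.fst_mem_support_of_mem_edges (hCeul.mem_edges_iff.mpr hvw)
  have hW := hCeul.rotate hvC
  exact pathChain_of_isEulerian hW ℓ (fun i => (hbound i).2) (hsum.trans hW.card_edgeFinset)
    fun _ _ => (hC.rotate hvC).getVert_ne

/-- cutting up a 4-locally self-avoiding Eulerian circuit.  If a graph
`G` with at least one edge admits a 4-locally self-avoiding Eulerian circuit, `v` has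
positive degree, and `L = (ℓ₁, …, ℓ_k)` satisfies `ℓᵢ ∈ {1, 2, 3, 4}` and
`ℓ₁ + ⋯ + ℓ_k = |E(G)|`, then `G` has a `P_{(L,v)}`-decomposition, i.e. an
`L`-path-chain from `v` to `v`. -/
theorem cut_circuit_into_paths {V : Type} [Fintype V] [DecidableEq V]
    (G : SimpleGraph V) [DecidableRel G.Adj]
    (hne : G.edgeSet.Nonempty) (hG : HasLSA4EulerianCircuit G)
    (v : V) (hv : 0 < G.degree v)
    (k : ℕ) (ℓ : Fin k → ℕ)
    (hbound : ∀ i, 1 ≤ ℓ i ∧ ℓ i ≤ 4) (hsum : ∑ i, ℓ i = G.edgeFinset.card) :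
    PathChain G v v ℓ :=
  cut_circuit_into_paths_general G hG v hv k ℓ hbound hsum

end Quartic
end
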